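/- arXiv:1005.1410 — 14 statements merged into one kernel-verified Lean document; each statement's English description precedes it below -/
import Mathlib

section
/- Let N ∈ ℕ and δ, ε, A_0, …, A_N ∈ ℝ. Let a : ℝ → ℝ be twice differentiable with a(t) > 0 for all t, let φ : ℝ → ℝ be differentiable, and let G_0, …, G_N : ℝ → ℝ be such that the scale factor equation H'(t) + δ H(t)² + ε φ'(t)² = Σ_{i=0}^N G_i(t)/a(t)^{A_i} holds for all t ∈ ℝ, where H = a'/a. Let θ > 0 and q ∈ ℝ \ {0}, let τ : ℝ → ℝ satisfy τ'(t) = θ a(t)^{q−δ} for all t, and let f : ℝ → ℝ be a differentiable inverse of τ (f(τ(t)) = t for all t). Define Y(s) = a(f(s))^q, φ̃(s) = φ(f(s)), Q(s) = q ε φ̃'(s)², λ_i(s) = (q/θ²) G_i(f(s)), and B_i = (A_i + q − 2δ)/q. Then for every t ∈ ℝ, at the point s = τ(t) the function Y is twice differentiable and satisfies the generalized EMP equation Y''(s) + Q(s) Y(s) = Σ_{i=0}^N λ_i(s)/Y(s)^{B_i}. -/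
/-- forward direction of the scale factor ↔ generalized EMP correspondence. -/
theorem stmt_0
    (N : ℕ) (δ ε : ℝ) (A : Fin (N + 1) → ℝ)
    (a φ : ℝ → ℝ) (G : Fin (N + 1) → ℝ → ℝ)
    (ha : Differentiable ℝ a) (ha' : Differentiable ℝ (deriv a))
    (hapos : ∀ t, 0 < a t)
    (hφ : Differentiable ℝ φ)
    (hSF : ∀ t, deriv (fun t => deriv a t / a t) t
        + δ * (deriv a t / a t) ^ 2 + ε * (deriv φ t) ^ 2
        = ∑ i, G i t / a t ^ A i)
    (θ q : ℝ) (hθ : 0 < θ) (hq : q ≠ 0)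
    (τ f : ℝ → ℝ)
    (hτ : ∀ t, deriv τ t = θ * a t ^ (q - δ))
    (hf : Differentiable ℝ f) (hfτ : ∀ t, f (τ t) = t)
    (Y φt Q : ℝ → ℝ) (lam : Fin (N + 1) → ℝ → ℝ) (B : Fin (N + 1) → ℝ)
    (hY : ∀ s, Y s = a (f s) ^ q)
    (hφt : ∀ s, φt s = φ (f s))
    (hQ : ∀ s, Q s = q * ε * (deriv φt s) ^ 2)
    (hlam : ∀ i s, lam i s = (q / θ ^ 2) * G i (f s))
    (hB : ∀ i, B i = (A i + q - 2 * δ) / q) :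
    ∀ t, DifferentiableAt ℝ Y (τ t) ∧ DifferentiableAt ℝ (deriv Y) (τ t) ∧
      deriv (deriv Y) (τ t) + Q (τ t) * Y (τ t)
        = ∑ i, lam i (τ t) / Y (τ t) ^ B i := by
  have hane : ∀ t, a t ≠ 0 := fun t => (hapos t).ne'
  have hτ'pos : ∀ t, 0 < deriv τ t := fun t => by
    rw [hτ]
    exact mul_pos hθ (Real.rpow_pos_of_pos (hapos t) _)
  have hτdiff : ∀ t, DifferentiableAt ℝ τ t := fun t =>
    differentiableAt_of_deriv_ne_zero (hτ'pos t).ne'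
  have hτmono : StrictMono τ := strictMono_of_deriv_pos hτ'pos
  have hτder : ∀ t, HasDerivAt τ (θ * a t ^ (q - δ)) t := fun t => by
    rw [← hτ]; exact (hτdiff t).hasDerivAt
  have hXne : ∀ t, θ * a t ^ (q - δ) ≠ 0 := fun t =>
    (mul_pos hθ (Real.rpow_pos_of_pos (hapos t) _)).ne'
  -- derivative of f on the range of τ
  have hfτ' : ∀ t, deriv f (τ t) = (θ * a t ^ (q - δ))⁻¹ := by
    intro t
    have h1 : HasDerivAt (f ∘ τ) (deriv f (τ t) * (θ * a t ^ (q - δ))) t :=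
      (hf (τ t)).hasDerivAt.comp t (hτder t)
    have h2 : f ∘ τ = id := funext hfτ
    rw [h2] at h1
    have h3 : deriv f (τ t) * (θ * a t ^ (q - δ)) = 1 := h1.unique (hasDerivAt_id t)
    exact eq_inv_of_mul_eq_one_left h3
  -- derivative of Y everywhere
  have haf : ∀ s, HasDerivAt (fun s => a (f s)) (deriv a (f s) * deriv f s) s := fun s =>
    (ha (f s)).hasDerivAt.comp s (hf s).hasDerivAt
  have hYfun : Y = fun s => a (f s) ^ q := funext hY
  have hYd : ∀ s, HasDerivAt Y (deriv a (f s) * deriv f s * q * a (f s) ^ (q - 1)) s := by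
    intro s
    rw [hYfun]
    exact (haf s).rpow_const (Or.inl (hane (f s)))
  -- the nice version Z of deriv Y
  set Z : ℝ → ℝ := fun s => q / θ * (a (f s) ^ (δ - 1) * deriv a (f s)) with hZdef
  have hZval : ∀ t, deriv Y (τ t) = Z (τ t) := by
    intro t
    rw [(hYd (τ t)).deriv, hfτ' t]
    simp only [hZdef, hfτ t]
    have e1 : a t ^ (δ - 1 : ℝ) = a t ^ (q - 1 : ℝ) / a t ^ (q - δ : ℝ) := by
      rw [← Real.rpow_sub (hapos t)]; ring_nf
    rw [e1]
    have h2 : a t ^ (q - δ : ℝ) ≠ 0 := (Real.rpow_pos_of_pos (hapos t) _).ne'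
    field_simp
  intro t
  -- eventual equality of deriv Y and Z near τ t
  have hev : deriv Y =ᶠ[nhds (τ t)] Z := by
    have hmem : Set.Ioo (τ (t - 1)) (τ (t + 1)) ∈ nhds (τ t) :=
      Ioo_mem_nhds (hτmono (by linarith)) (hτmono (by linarith))
    filter_upwards [hmem] with s hs
    have hcont : ContinuousOn τ (Set.Icc (t - 1) (t + 1)) :=
      fun x _ => ((hτdiff x).continuousAt).continuousWithinAt
    obtain ⟨t', _, rfl⟩ := intermediate_value_Ioo (by linarith : t - 1 ≤ t + 1) hcont hs
    exact hZval t'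
  -- Z is differentiable
  have hZd : ∀ s, HasDerivAt Z (q / θ *
      ((deriv a (f s) * deriv f s * (δ - 1) * a (f s) ^ (δ - 1 - 1)) * deriv a (f s)
        + a (f s) ^ (δ - 1 : ℝ) * (deriv (deriv a) (f s) * deriv f s))) s := by
    intro s
    have h1 : HasDerivAt (fun s => a (f s) ^ (δ - 1 : ℝ))
        (deriv a (f s) * deriv f s * (δ - 1) * a (f s) ^ (δ - 1 - 1)) s :=
      (haf s).rpow_const (Or.inl (hane (f s)))
    have h2 : HasDerivAt (fun s => deriv a (f s)) (deriv (deriv a) (f s) * deriv f s) s :=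
      (ha' (f s)).hasDerivAt.comp s (hf s).hasDerivAt
    exact (h1.mul h2).const_mul (q / θ)
  refine ⟨(hYd (τ t)).differentiableAt, ?_, ?_⟩
  · exact (hZd (τ t)).differentiableAt.congr_of_eventuallyEq hev
  -- second derivative
  have hderiv2 : deriv (deriv Y) (τ t) = q / θ *
      ((deriv a t * (θ * a t ^ (q - δ))⁻¹ * (δ - 1) * a t ^ (δ - 1 - 1)) * deriv a t
        + a t ^ (δ - 1 : ℝ) * (deriv (deriv a) t * (θ * a t ^ (q - δ))⁻¹)) := by
    rw [hev.deriv_eq, (hZd (τ t)).deriv, hfτ t, hfτ' t]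
  -- derivative of φt at τ t
  have hφtd : deriv φt (τ t) = deriv φ t * (θ * a t ^ (q - δ))⁻¹ := by
    have hfun : φt = φ ∘ f := funext hφt
    have h1 : HasDerivAt (φ ∘ f) (deriv φ (f (τ t)) * deriv f (τ t)) (τ t) :=
      (hφ (f (τ t))).hasDerivAt.comp (τ t) (hf (τ t)).hasDerivAt
    rw [hfun, h1.deriv, hfτ t, hfτ' t]
  -- derivative of H = a'/a at t
  have hHd : deriv (fun t => deriv a t / a t) t
      = (deriv (deriv a) t * a t - deriv a t * deriv a t) / a t ^ 2 :=
    ((ha' t).hasDerivAt.div (ha t).hasDerivAt (hane t)).deriv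
  -- rewrite RHS sum
  have hrhs : ∀ i : Fin (N + 1), lam i (τ t) / Y (τ t) ^ B i
      = q / θ ^ 2 * a t ^ (2 * δ - q) * (G i t / a t ^ A i) := by
    intro i
    rw [hlam, hY, hfτ t, ← Real.rpow_mul (hapos t).le, hB]
    have e1 : q * ((A i + q - 2 * δ) / q) = A i - (2 * δ - q) := by field_simp; ring
    rw [e1, Real.rpow_sub (hapos t)]
    have h2 : a t ^ (A i : ℝ) ≠ 0 := (Real.rpow_pos_of_pos (hapos t) _).ne'
    have h3 : a t ^ (2 * δ - q : ℝ) ≠ 0 := (Real.rpow_pos_of_pos (hapos t) _).ne'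
    field_simp
  have hsum : ∑ i, lam i (τ t) / Y (τ t) ^ B i
      = q / θ ^ 2 * a t ^ (2 * δ - q) *
        (deriv (fun t => deriv a t / a t) t + δ * (deriv a t / a t) ^ 2
          + ε * (deriv φ t) ^ 2) := by
    rw [hSF t, Finset.mul_sum]
    exact Finset.sum_congr rfl fun i _ => hrhs i
  rw [hsum, hderiv2, hQ, hφtd, hY, hfτ t, hHd]
  -- now pure algebra with rpow identities
  have hx := hapos t
  have e1 : a t ^ (δ - 1 - 1 : ℝ) = a t ^ δ / (a t * a t) := by
    have : (δ - 1 - 1 : ℝ) = δ - 2 := by ring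
    rw [this, Real.rpow_sub hx]
    norm_num [Real.rpow_two]
    ring_nf
  have e2 : a t ^ (δ - 1 : ℝ) = a t ^ δ / a t := by
    rw [Real.rpow_sub hx, Real.rpow_one]
  have e3 : a t ^ (q - δ : ℝ) = a t ^ q / a t ^ δ := Real.rpow_sub hx q δ
  have e4 : a t ^ (2 * δ - q : ℝ) = a t ^ δ * a t ^ δ / a t ^ q := by
    rw [Real.rpow_sub hx]
    congr 1
    rw [two_mul, Real.rpow_add hx]
  rw [e1, e2, e3, e4]
  have hu : a t ^ (δ : ℝ) ≠ 0 := (Real.rpow_pos_of_pos hx _).ne'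
  have hv : a t ^ (q : ℝ) ≠ 0 := (Real.rpow_pos_of_pos hx _).ne'
  have hθ' : θ ≠ 0 := hθ.ne'
  field_simp
  ring
end

section
/- Let N ∈ ℕ and δ, B_0, …, B_N ∈ ℝ, θ > 0, and q, ε ∈ ℝ \ {0}. Let Y : ℝ → ℝ be twice differentiable with Y(s) > 0 for all s, let Q : ℝ → ℝ be continuous, and let λ_0, …, λ_N : ℝ → ℝ satisfy the generalized EMP equation Y''(s) + Q(s)Y(s) = Σ_{i=0}^N λ_i(s)/Y(s)^{B_i} for all s ∈ ℝ. Let τ : ℝ → ℝ be differentiable with τ'(t) = θ Y(τ(t))^{(q−δ)/q} for all t, and let φ̃ : ℝ → ℝ be differentiable with q ε φ̃'(s)² = Q(s) for all s. Define a(t) = Y(τ(t))^{1/q}, φ(t) = φ̃(τ(t)), G_i(t) = (θ²/q) λ_i(τ(t)), and A_i = q(B_i − 1) + 2δ. Then a is positive and twice differentiable, and for all t ∈ ℝ the scale factor equation H'(t) + δ H(t)² + ε φ'(t)² = Σ_{i=0}^N G_i(t)/a(t)^{A_i} holds, where H = a'/a. -/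
/-- converse direction, from a generalized EMP equation back to the
scale factor equation. -/
theorem stmt_1
    (N : ℕ) (δ θ q ε : ℝ) (B : Fin (N + 1) → ℝ)
    (hθ : 0 < θ) (hq : q ≠ 0) (hε : ε ≠ 0)
    (Y Q : ℝ → ℝ) (lam : Fin (N + 1) → ℝ → ℝ)
    (hYd : Differentiable ℝ Y) (hYd' : Differentiable ℝ (deriv Y))
    (hYpos : ∀ s, 0 < Y s)
    (hQc : Continuous Q)
    (hEMP : ∀ s, deriv (deriv Y) s + Q s * Y s = ∑ i, lam i s / Y s ^ B i)
    (τ φt : ℝ → ℝ)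
    (hτd : Differentiable ℝ τ)
    (hτ : ∀ t, deriv τ t = θ * Y (τ t) ^ ((q - δ) / q))
    (hφtd : Differentiable ℝ φt)
    (hφt : ∀ s, q * ε * (deriv φt s) ^ 2 = Q s)
    (a φ : ℝ → ℝ) (G : Fin (N + 1) → ℝ → ℝ) (A : Fin (N + 1) → ℝ)
    (ha : ∀ t, a t = Y (τ t) ^ (1 / q))
    (hφ : ∀ t, φ t = φt (τ t))
    (hG : ∀ i t, G i t = (θ ^ 2 / q) * lam i (τ t))
    (hA : ∀ i, A i = q * (B i - 1) + 2 * δ) :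
    (∀ t, 0 < a t) ∧ Differentiable ℝ a ∧ Differentiable ℝ (deriv a) ∧
      ∀ t, deriv (fun t => deriv a t / a t) t + δ * (deriv a t / a t) ^ 2
          + ε * (deriv φ t) ^ 2 = ∑ i, G i t / a t ^ A i := by
  have haf : a = fun t => Y (τ t) ^ (1 / q) := funext ha
  have hφf : φ = fun t => φt (τ t) := funext hφ
  have hGf : G = fun i t => (θ ^ 2 / q) * lam i (τ t) := funext fun i => funext (hG i)
  have hAf : A = fun i => q * (B i - 1) + 2 * δ := funext hA
  subst haf hφf hGf hAf
  have hupos : ∀ t, (0:ℝ) < Y (τ t) := fun t => hYpos _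
  have hune : ∀ t, Y (τ t) ≠ 0 := fun t => (hupos t).ne'
  -- derivative of u = Y ∘ τ
  have hU : ∀ t, HasDerivAt (fun t => Y (τ t))
      (deriv Y (τ t) * (θ * Y (τ t) ^ ((q - δ) / q))) t := by
    intro t
    have h := (hYd (τ t)).hasDerivAt.comp t (hτd t).hasDerivAt
    rwa [hτ t] at h
  -- derivative of u ^ p
  have hR : ∀ (p : ℝ) (t : ℝ), HasDerivAt (fun t => Y (τ t) ^ p)
      (deriv Y (τ t) * (θ * Y (τ t) ^ ((q - δ) / q)) * p * Y (τ t) ^ (p - 1)) t :=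
    fun p t => (hU t).rpow_const (Or.inl (hune t))
  have hAt : ∀ t, HasDerivAt (fun t => Y (τ t) ^ (1 / q))
      (deriv Y (τ t) * (θ * Y (τ t) ^ ((q - δ) / q)) * (1 / q) * Y (τ t) ^ (1 / q - 1)) t :=
    fun t => hR (1 / q) t
  refine ⟨fun t => Real.rpow_pos_of_pos (hupos t) _, fun t => (hAt t).differentiableAt, ?_, ?_⟩
  · have hda : deriv (fun t => Y (τ t) ^ (1 / q)) = fun t =>
        deriv Y (τ t) * (θ * Y (τ t) ^ ((q - δ) / q)) * (1 / q) * Y (τ t) ^ (1 / q - 1) :=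
      funext fun t => (hAt t).deriv
    rw [hda]
    intro t
    exact ((((hYd' (τ t)).comp t (hτd t)).mul
      (((hR ((q - δ) / q) t).differentiableAt).const_mul θ)).mul_const (1 / q)).mul
      ((hR (1 / q - 1) t).differentiableAt)
  intro t
  -- H = a'/a as explicit function
  have hHfun : (fun t => deriv (fun s => Y (τ s) ^ (1 / q)) t / Y (τ t) ^ (1 / q))
      = fun t => θ / q * (deriv Y (τ t) * Y (τ t) ^ (-δ / q)) := by
    funext t
    rw [(hAt t).deriv]
    have e : Y (τ t) ^ ((q - δ) / q) * Y (τ t) ^ (1 / q - 1)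
        = Y (τ t) ^ (-δ / q) * Y (τ t) ^ (1 / q) := by
      rw [← Real.rpow_add (hupos t), ← Real.rpow_add (hupos t)]
      congr 1
      field_simp
      ring
    rw [div_eq_iff (Real.rpow_pos_of_pos (hupos t) (1 / q)).ne']
    linear_combination (θ / q * deriv Y (τ t)) * e
  rw [hHfun, congrFun hHfun t]
  -- derivative of H
  have hF : HasDerivAt (fun t => θ / q * (deriv Y (τ t) * Y (τ t) ^ (-δ / q)))
      (θ / q * (deriv (deriv Y) (τ t) * (θ * Y (τ t) ^ ((q - δ) / q)) * Y (τ t) ^ (-δ / q)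
        + deriv Y (τ t) * (deriv Y (τ t) * (θ * Y (τ t) ^ ((q - δ) / q)) * (-δ / q)
            * Y (τ t) ^ (-δ / q - 1)))) t := by
    have hg : HasDerivAt (fun t => deriv Y (τ t))
        (deriv (deriv Y) (τ t) * (θ * Y (τ t) ^ ((q - δ) / q))) t := by
      have h := (hYd' (τ t)).hasDerivAt.comp t (hτd t).hasDerivAt
      rwa [hτ t] at h
    exact (hg.mul (hR (-δ / q) t)).const_mul (θ / q)
  rw [hF.deriv]
  -- derivative of φ
  have hφAt : HasDerivAt (fun t => φt (τ t))
      (deriv φt (τ t) * (θ * Y (τ t) ^ ((q - δ) / q))) t := by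
    have h := (hφtd (τ t)).hasDerivAt.comp t (hτd t).hasDerivAt
    rwa [hτ t] at h
  rw [hφAt.deriv]
  -- Q relation
  have hQ : ε * (deriv φt (τ t)) ^ 2 = Q (τ t) / q := by
    have h := hφt (τ t)
    field_simp
    linarith [h]
  -- exponent identities
  have e2 : Y (τ t) ^ ((q - δ) / q) * Y (τ t) ^ (-δ / q - 1)
      = Y (τ t) ^ (-δ / q) * Y (τ t) ^ (-δ / q) := by
    rw [← Real.rpow_add (hupos t), ← Real.rpow_add (hupos t)]
    congr 1; field_simp; ring
  have e3 : Y (τ t) ^ ((q - δ) / q) * Y (τ t) ^ (-δ / q)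
      = Y (τ t) ^ ((q - 2 * δ) / q) := by
    rw [← Real.rpow_add (hupos t)]
    congr 1; field_simp; ring
  have e4 : Y (τ t) ^ ((q - δ) / q) * Y (τ t) ^ ((q - δ) / q)
      = Y (τ t) ^ ((q - 2 * δ) / q) * Y (τ t) := by
    rw [← Real.rpow_add (hupos t), ← Real.rpow_add_one (hune t)]
    congr 1; field_simp; ring
  calc θ / q * (deriv (deriv Y) (τ t) * (θ * Y (τ t) ^ ((q - δ) / q)) * Y (τ t) ^ (-δ / q)
        + deriv Y (τ t) * (deriv Y (τ t) * (θ * Y (τ t) ^ ((q - δ) / q)) * (-δ / q)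
            * Y (τ t) ^ (-δ / q - 1)))
      + δ * (θ / q * (deriv Y (τ t) * Y (τ t) ^ (-δ / q))) ^ 2
      + ε * (deriv φt (τ t) * (θ * Y (τ t) ^ ((q - δ) / q))) ^ 2
      = θ ^ 2 / q * Y (τ t) ^ ((q - 2 * δ) / q)
        * (deriv (deriv Y) (τ t) + Q (τ t) * Y (τ t)) := by
        have hQ2 : ε * (deriv φt (τ t) * (θ * Y (τ t) ^ ((q - δ) / q))) ^ 2
            = Q (τ t) / q * (θ ^ 2 * (Y (τ t) ^ ((q - δ) / q) * Y (τ t) ^ ((q - δ) / q))) := by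
          rw [show ε * (deriv φt (τ t) * (θ * Y (τ t) ^ ((q - δ) / q))) ^ 2
              = (ε * (deriv φt (τ t)) ^ 2) * (θ ^ 2 * (Y (τ t) ^ ((q - δ) / q) * Y (τ t) ^ ((q - δ) / q))) from by ring, hQ]
        rw [hQ2, e4]
        linear_combination (θ ^ 2 / q * deriv (deriv Y) (τ t)) * e3
          - (δ * θ ^ 2 / q ^ 2 * (deriv Y (τ t)) ^ 2) * e2
    _ = θ ^ 2 / q * Y (τ t) ^ ((q - 2 * δ) / q) * ∑ i, lam i (τ t) / Y (τ t) ^ B i := by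
        rw [hEMP (τ t)]
    _ = ∑ i, (θ ^ 2 / q) * lam i (τ t) / (Y (τ t) ^ (1 / q)) ^ (q * (B i - 1) + 2 * δ) := by
        rw [Finset.mul_sum]
        refine Finset.sum_congr rfl fun i _ => ?_
        rw [← Real.rpow_mul (hupos t).le]
        rw [div_eq_mul_inv (θ ^ 2 / q * lam i (τ t)), ← Real.rpow_neg (hupos t).le]
        rw [div_eq_mul_inv (lam i (τ t)), ← Real.rpow_neg (hupos t).le]
        rw [show θ ^ 2 / q * Y (τ t) ^ ((q - 2 * δ) / q) * (lam i (τ t) * Y (τ t) ^ (-B i))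
            = θ ^ 2 / q * lam i (τ t) * (Y (τ t) ^ ((q - 2 * δ) / q) * Y (τ t) ^ (-B i)) from by
              ring, ← Real.rpow_add (hupos t)]
        rw [show (q - 2 * δ) / q + -B i = -(1 / q * (q * (B i - 1) + 2 * δ)) from by
          field_simp; ring]
end

section
/- Let N ∈ ℕ, B ∈ ℝ \ {−1, 1}, and B_1, …, B_N ∈ ℝ \ {−1}. Let Y : ℝ → ℝ be twice differentiable with Y(s) > 0 for all s, and let Q, λ, λ_1, …, λ_N : ℝ → ℝ satisfy Y''(s) + Q(s)Y(s) = λ(s)/Y(s)^B + Σ_{i=1}^N λ_i(s)/Y(s)^{B_i} for all s ∈ ℝ. Let ϑ > 0, let τ_σ : ℝ → ℝ satisfy τ_σ'(t) = √ϑ · Y(τ_σ(t))^{(B+1)/4} for all t, let σ : ℝ → ℝ satisfy σ'(t) = 1/τ_σ'(t) for all t, and let g : ℝ → ℝ be a differentiable inverse of σ (g(σ(t)) = t for all t). Define u(s) = Y(τ_σ(g(s)))^{(1−B)/2}, P(s) = (ϑ²/2)(B−1) Q(τ_σ(g(s))) Y(τ_σ(g(s)))^{B+1}, E(s) = (ϑ²/2)(B−1)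 λ(τ_σ(g(s))), F_i(s) = (ϑ²/2)(1−B) λ_i(τ_σ(g(s))), and C_i = 1 − 2(B_i − 1)/(B − 1). Then for every t ∈ ℝ, at s = σ(t) the function u is twice differentiable and satisfies the Schrödinger-type equation u''(s) + [E(s) − P(s)]u(s) = Σ_{i=1}^N F_i(s)/u(s)^{C_i}. -/
/-!
Since `τ'² = ϑ Y(τ)^((B+1)/2)` and `σ' = 1/τ'`, the chain rule collapses the first derivative
of `u ∘ σ = Y(τ)^((1-B)/2)` to `u'(σ r) = (1-B)/2 · ϑ · Y'(τ r)`; differentiating once more (with `g' ∘ σ = τ'`) gives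
`u''(σ t) = (1-B)/2 · ϑ² · Y''(τ t) · Y(τ t)^((B+1)/2)`. Substituting the EMP equation for `Y''`,
the `λ` and `Q` terms cancel against `E u` and `P u`, and each `λ_i` term becomes
`F_i / u^{C_i}` because `(1-B)/2 · C_i = B_i - (B+1)/2`.
-/

open Filter Topology Function

theorem range_mem_nhds_of_strictMono {σ : ℝ → ℝ} (hc : Continuous σ) (hm : StrictMono σ)
    (t : ℝ) : Set.range σ ∈ 𝓝 (σ t) :=
  mem_of_superset (Ioo_mem_nhds (hm (sub_one_lt t)) (hm (lt_add_one t)))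
    ((intermediate_value_Ioo (by linarith) hc.continuousOn).trans (Set.image_subset_range _ _))

theorem DifferentiableAt.hasDerivAt_of_leftInverse {𝕜 : Type*} [NontriviallyNormedField 𝕜]
    {σ g : 𝕜 → 𝕜} {d t : 𝕜} (hg : DifferentiableAt 𝕜 g (σ t)) (hσ : HasDerivAt σ d t)
    (hgσ : LeftInverse g σ) : HasDerivAt g d⁻¹ (σ t) := by
  have hid : HasDerivAt (g ∘ σ) (deriv g (σ t) * d) t := hg.hasDerivAt.comp t hσ
  rw [hgσ.comp_eq_id] at hid
  rw [← eq_inv_of_mul_eq_one_left (hid.unique (hasDerivAt_id t))]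
  exact hg.hasDerivAt

theorem deriv_eq_div_of_hasDerivAt_comp {𝕜 : Type*} [NontriviallyNormedField 𝕜]
    {u σ : 𝕜 → 𝕜} {d v r : 𝕜} (hu : DifferentiableAt 𝕜 u (σ r)) (hσ : HasDerivAt σ d r)
    (hd : d ≠ 0) (h : HasDerivAt (u ∘ σ) v r) : deriv u (σ r) = v / d :=
  eq_div_of_mul_eq hd ((hu.hasDerivAt.comp r hσ).unique h)

theorem emp_schrodinger_identity {N : ℕ} {B ϑ y y'' q l : ℝ} {Bi li : Fin N → ℝ}
    (hy : 0 < y) (hB : B ≠ 1) (h : y'' + q * y = l / y ^ B + ∑ i, li i / y ^ Bi i) :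
    (1 - B) / 2 * ϑ * y'' * (ϑ * y ^ ((B + 1) / 2))
      + (ϑ ^ 2 / 2 * (B - 1) * l - ϑ ^ 2 / 2 * (B - 1) * q * y ^ (B + 1)) * y ^ ((1 - B) / 2)
      = ∑ i, ϑ ^ 2 / 2 * (1 - B) * li i / (y ^ ((1 - B) / 2)) ^ (1 - 2 * (Bi i - 1) / (B - 1)) := by
  have hlam : l / y ^ B * y ^ ((B + 1) / 2) = l * y ^ ((1 - B) / 2) := by
    rw [div_mul_eq_mul_div, mul_div_assoc, ← Real.rpow_sub hy]
    ring_nf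
  have hQ : y * y ^ ((B + 1) / 2) = y ^ (B + 1) * y ^ ((1 - B) / 2) := by
    rw [← Real.rpow_add hy]
    nth_rw 1 [← Real.rpow_one y]
    rw [← Real.rpow_add hy]
    ring_nf
  have hlami : ∀ i, li i / y ^ Bi i * y ^ ((B + 1) / 2)
      = li i / (y ^ ((1 - B) / 2)) ^ (1 - 2 * (Bi i - 1) / (B - 1)) := fun i => by
    have hC : (1 - B) / 2 * (1 - 2 * (Bi i - 1) / (B - 1)) = Bi i - (B + 1) / 2 := by
      field_simp [sub_ne_zero.2 hB]
      ring
    rw [← Real.rpow_mul hy.le, hC, Real.rpow_sub hy, div_div_eq_mul_div, div_mul_eq_mul_div]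
  have hsum : (∑ i, li i / y ^ Bi i) * y ^ ((B + 1) / 2)
      = ∑ i, li i / (y ^ ((1 - B) / 2)) ^ (1 - 2 * (Bi i - 1) / (B - 1)) := by
    rw [Finset.sum_mul]
    exact Finset.sum_congr rfl fun i _ => hlami i
  rw [Finset.sum_congr rfl fun i _ => mul_div_assoc (ϑ ^ 2 / 2 * (1 - B)) (li i) _,
    ← Finset.mul_sum, ← hsum]
  linear_combination (1 - B) / 2 * ϑ ^ 2 * y ^ ((B + 1) / 2) * h
    + (1 - B) / 2 * ϑ ^ 2 * hlam - (1 - B) / 2 * ϑ ^ 2 * q * hQ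

section TimeChange

variable {B ϑ : ℝ} {Y τ σ g : ℝ → ℝ}

theorem deriv_timeChange_pos (hϑ : 0 < ϑ) (hY : ∀ s, 0 < Y s)
    (hτ : ∀ t, deriv τ t = √ϑ * Y (τ t) ^ ((B + 1) / 4)) (t : ℝ) : 0 < deriv τ t :=
  hτ t ▸ mul_pos (Real.sqrt_pos.2 hϑ) (Real.rpow_pos_of_pos (hY _) _)

theorem sq_deriv_timeChange (hϑ : 0 ≤ ϑ) (hY : ∀ s, 0 < Y s)
    (hτ : ∀ t, deriv τ t = √ϑ * Y (τ t) ^ ((B + 1) / 4)) (t : ℝ) :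
    deriv τ t ^ 2 = ϑ * Y (τ t) ^ ((B + 1) / 2) := by
  rw [hτ, mul_pow, Real.sq_sqrt hϑ, ← Real.rpow_mul_natCast (hY _).le]
  ring_nf

theorem differentiableAt_transformed (hY : ∀ s, 0 < Y s) (hYd : Differentiable ℝ Y)
    (hτ₀ : ∀ t, 0 < deriv τ t) (hg : Differentiable ℝ g) (s : ℝ) :
    DifferentiableAt ℝ (fun s => Y (τ (g s)) ^ ((1 - B) / 2)) s :=
  ((hYd _).comp s ((differentiableAt_of_deriv_ne_zero (hτ₀ _).ne').comp s (hg s))).rpow_const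
    (Or.inl (hY _).ne')

theorem deriv_transformed (hY : ∀ s, 0 < Y s) (hYd : Differentiable ℝ Y)
    (hτ₀ : ∀ t, 0 < deriv τ t) (hτ₂ : ∀ t, deriv τ t ^ 2 = ϑ * Y (τ t) ^ ((B + 1) / 2))
    (hσ : ∀ t, deriv σ t = 1 / deriv τ t) (hg : Differentiable ℝ g) (hgσ : LeftInverse g σ)
    (r : ℝ) :
    deriv (fun s => Y (τ (g s)) ^ ((1 - B) / 2)) (σ r) = (1 - B) / 2 * ϑ * deriv Y (τ r) := by
  have hσ₀ : deriv σ r ≠ 0 := by simpa [hσ] using (hτ₀ r).ne'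
  have hcomp : HasDerivAt ((fun s => Y (τ (g s)) ^ ((1 - B) / 2)) ∘ σ)
      (deriv Y (τ r) * deriv τ r * ((1 - B) / 2) * Y (τ r) ^ ((1 - B) / 2 - 1)) r := by
    simp only [comp_def, hgσ _]
    exact ((hYd _).hasDerivAt.comp r (differentiableAt_of_deriv_ne_zero (hτ₀ r).ne').hasDerivAt
      ).rpow_const (Or.inl (hY _).ne')
  rw [deriv_eq_div_of_hasDerivAt_comp (differentiableAt_transformed hY hYd hτ₀ hg _)
    (differentiableAt_of_deriv_ne_zero hσ₀).hasDerivAt hσ₀ hcomp, hσ, one_div, div_inv_eq_mul]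
  have hpow : Y (τ r) ^ ((B + 1) / 2) * Y (τ r) ^ ((1 - B) / 2 - 1) = 1 := by
    rw [← Real.rpow_add (hY _)]
    ring_nf
    exact Real.rpow_zero _
  linear_combination (1 - B) / 2 * deriv Y (τ r) * Y (τ r) ^ ((1 - B) / 2 - 1) * hτ₂ r
    + (1 - B) / 2 * ϑ * deriv Y (τ r) * hpow

theorem hasDerivAt_deriv_transformed (hY : ∀ s, 0 < Y s) (hYd : Differentiable ℝ Y)
    (hYd' : Differentiable ℝ (deriv Y)) (hτ₀ : ∀ t, 0 < deriv τ t)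
    (hτ₂ : ∀ t, deriv τ t ^ 2 = ϑ * Y (τ t) ^ ((B + 1) / 2))
    (hσ : ∀ t, deriv σ t = 1 / deriv τ t) (hg : Differentiable ℝ g) (hgσ : LeftInverse g σ)
    (t : ℝ) :
    HasDerivAt (deriv (fun s => Y (τ (g s)) ^ ((1 - B) / 2)))
      ((1 - B) / 2 * ϑ * deriv (deriv Y) (τ t) * deriv τ t ^ 2) (σ t) := by
  have hσ₀ : ∀ r, 0 < deriv σ r := fun r => by simpa [hσ] using hτ₀ r
  have hσd : ∀ r, HasDerivAt σ (deriv σ r) r := fun r =>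
    (differentiableAt_of_deriv_ne_zero (hσ₀ r).ne').hasDerivAt
  -- `deriv_transformed` only describes `u'` on `range σ`, which is a neighbourhood of `σ t`.
  have hev : deriv (fun s => Y (τ (g s)) ^ ((1 - B) / 2))
      =ᶠ[𝓝 (σ t)] fun s => (1 - B) / 2 * ϑ * deriv Y (τ (g s)) := by
    filter_upwards [range_mem_nhds_of_strictMono
      (continuous_iff_continuousAt.2 fun r => (hσd r).continuousAt) (strictMono_of_deriv_pos hσ₀) t]
    rintro _ ⟨r, rfl⟩
    rw [deriv_transformed hY hYd hτ₀ hτ₂ hσ hg hgσ, hgσ]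
  have hg' : HasDerivAt g (deriv τ t) (σ t) := by
    simpa [hσ] using (hg (σ t)).hasDerivAt_of_leftInverse (hσd t) hgσ
  have hτg : HasDerivAt (fun s => τ (g s)) (deriv τ t * deriv τ t) (σ t) :=
    (differentiableAt_of_deriv_ne_zero (hτ₀ t).ne').hasDerivAt.comp_of_eq (σ t) hg' (hgσ t).symm
  refine HasDerivAt.congr_of_eventuallyEq ?_ hev
  exact (((hYd' _).hasDerivAt.comp_of_eq (σ t) hτg (by rw [hgσ])).const_mul _).congr_deriv
    (by ring)

end TimeChange

theorem stmt_2_general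
    (N : ℕ) (B : ℝ) (hB2 : B ≠ 1)
    (Bi : Fin N → ℝ)
    (Y Q lam : ℝ → ℝ) (lami : Fin N → ℝ → ℝ)
    (hYd : Differentiable ℝ Y) (hYd' : Differentiable ℝ (deriv Y))
    (hYpos : ∀ s, 0 < Y s)
    (hEMP : ∀ s, deriv (deriv Y) s + Q s * Y s
        = lam s / Y s ^ B + ∑ i, lami i s / Y s ^ Bi i)
    (ϑ : ℝ) (hϑ : 0 < ϑ)
    (τσ σ g : ℝ → ℝ)
    (hτσ : ∀ t, deriv τσ t = Real.sqrt ϑ * Y (τσ t) ^ ((B + 1) / 4))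
    (hσ : ∀ t, deriv σ t = 1 / deriv τσ t)
    (hg : Differentiable ℝ g) (hgσ : ∀ t, g (σ t) = t)
    (u P E : ℝ → ℝ) (F : Fin N → ℝ → ℝ) (C : Fin N → ℝ)
    (hu : ∀ s, u s = Y (τσ (g s)) ^ ((1 - B) / 2))
    (hP : ∀ s, P s = (ϑ ^ 2 / 2) * (B - 1) * Q (τσ (g s)) * Y (τσ (g s)) ^ (B + 1))
    (hE : ∀ s, E s = (ϑ ^ 2 / 2) * (B - 1) * lam (τσ (g s)))
    (hF : ∀ i s, F i s = (ϑ ^ 2 / 2) * (1 - B) * lami i (τσ (g s)))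
    (hC : ∀ i, C i = 1 - 2 * (Bi i - 1) / (B - 1)) :
    ∀ t, DifferentiableAt ℝ u (σ t) ∧ DifferentiableAt ℝ (deriv u) (σ t) ∧
      deriv (deriv u) (σ t) + (E (σ t) - P (σ t)) * u (σ t)
        = ∑ i, F i (σ t) / u (σ t) ^ C i := by
  intro t
  obtain rfl : u = _ := funext hu
  obtain rfl : P = _ := funext hP
  obtain rfl : E = _ := funext hE
  obtain rfl : F = _ := funext fun i => funext (hF i)
  obtain rfl : C = _ := funext hC
  have hτ₀ := deriv_timeChange_pos hϑ hYpos hτσ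
  have hτ₂ := sq_deriv_timeChange hϑ.le hYpos hτσ
  have hu'' := hasDerivAt_deriv_transformed hYpos hYd hYd' hτ₀ hτ₂ hσ hg hgσ t
  refine ⟨differentiableAt_transformed hYpos hYd hτ₀ hg _, hu''.differentiableAt, ?_⟩
  rw [hu''.deriv, hτ₂]
  simp only [hgσ t]
  exact emp_schrodinger_identity (hYpos _) hB2 (hEMP _)

/-- from a generalized EMP equation to a Schrödinger-type equation. -/
theorem stmt_2
    (N : ℕ) (B : ℝ) (hB1 : B ≠ -1) (hB2 : B ≠ 1)
    (Bi : Fin N → ℝ) (hBi : ∀ i, Bi i ≠ -1)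
    (Y Q lam : ℝ → ℝ) (lami : Fin N → ℝ → ℝ)
    (hYd : Differentiable ℝ Y) (hYd' : Differentiable ℝ (deriv Y))
    (hYpos : ∀ s, 0 < Y s)
    (hEMP : ∀ s, deriv (deriv Y) s + Q s * Y s
        = lam s / Y s ^ B + ∑ i, lami i s / Y s ^ Bi i)
    (ϑ : ℝ) (hϑ : 0 < ϑ)
    (τσ σ g : ℝ → ℝ)
    (hτσ : ∀ t, deriv τσ t = Real.sqrt ϑ * Y (τσ t) ^ ((B + 1) / 4))
    (hσ : ∀ t, deriv σ t = 1 / deriv τσ t)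
    (hg : Differentiable ℝ g) (hgσ : ∀ t, g (σ t) = t)
    (u P E : ℝ → ℝ) (F : Fin N → ℝ → ℝ) (C : Fin N → ℝ)
    (hu : ∀ s, u s = Y (τσ (g s)) ^ ((1 - B) / 2))
    (hP : ∀ s, P s = (ϑ ^ 2 / 2) * (B - 1) * Q (τσ (g s)) * Y (τσ (g s)) ^ (B + 1))
    (hE : ∀ s, E s = (ϑ ^ 2 / 2) * (B - 1) * lam (τσ (g s)))
    (hF : ∀ i s, F i s = (ϑ ^ 2 / 2) * (1 - B) * lami i (τσ (g s)))
    (hC : ∀ i, C i = 1 - 2 * (Bi i - 1) / (B - 1)) :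
    ∀ t, DifferentiableAt ℝ u (σ t) ∧ DifferentiableAt ℝ (deriv u) (σ t) ∧
      deriv (deriv u) (σ t) + (E (σ t) - P (σ t)) * u (σ t)
        = ∑ i, F i (σ t) / u (σ t) ^ C i :=
  stmt_2_general N B hB2 Bi Y Q lam lami hYd hYd' hYpos hEMP ϑ hϑ τσ σ g hτσ hσ hg hgσ u P E F C hu
    hP hE hF hC
end

section
/- Let N ∈ ℕ, C_1, …, C_N ∈ ℝ, ϑ > 0, and B ∈ ℝ \ {−1, 1}. Let u : ℝ → ℝ be twice differentiable with u(s) > 0 for all s, and let E, P, F_1, …, F_N : ℝ → ℝ satisfy u''(s) + [E(s) − P(s)]u(s) = Σ_{i=1}^N F_i(s)/u(s)^{C_i} for all s ∈ ℝ. Let σ : ℝ → ℝ satisfy σ'(t) = (1/√ϑ) u(σ(t))^{(B+1)/(2(B−1))} for all t, let τ_σ : ℝ → ℝ satisfy τ_σ'(t) = 1/σ'(t) for all t, and let f_σ : ℝ → ℝ be a differentiable inverse of τ_σ (f_σ(τ_σ(t)) = t for all t). Define Y(s) = u(σ(f_σ(s)))^{2/(1−B)}, Q(s) = (2/(ϑ²(B−1)))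 P(σ(f_σ(s))) u(σ(f_σ(s)))^{2(B+1)/(B−1)}, λ(s) = (2/(ϑ²(B−1))) E(σ(f_σ(s))), λ_i(s) = (2/(ϑ²(1−B))) F_i(σ(f_σ(s))), and B_i = ((1−B)C_i + (B+1))/2. Then for every t ∈ ℝ, at s = τ_σ(t) the function Y is twice differentiable and satisfies the generalized EMP equation Y''(s) + Q(s)Y(s) = λ(s)/Y(s)^B + Σ_{i=1}^N λ_i(s)/Y(s)^{B_i}. -/
/-- from a Schrödinger-type equation back to a generalized EMP equation. -/
theorem stmt_3
    (N : ℕ) (C : Fin N → ℝ) (ϑ B : ℝ) (hϑ : 0 < ϑ)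
    (hB1 : B ≠ -1) (hB2 : B ≠ 1)
    (u E P : ℝ → ℝ) (F : Fin N → ℝ → ℝ)
    (hud : Differentiable ℝ u) (hud' : Differentiable ℝ (deriv u))
    (hupos : ∀ s, 0 < u s)
    (hNLS : ∀ s, deriv (deriv u) s + (E s - P s) * u s = ∑ i, F i s / u s ^ C i)
    (σ τσ fσ : ℝ → ℝ)
    (hσ : ∀ t, deriv σ t = (1 / Real.sqrt ϑ) * u (σ t) ^ ((B + 1) / (2 * (B - 1))))
    (hτσ : ∀ t, deriv τσ t = 1 / deriv σ t)
    (hfσ : Differentiable ℝ fσ) (hfστσ : ∀ t, fσ (τσ t) = t)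
    (Y Q lam : ℝ → ℝ) (lami : Fin N → ℝ → ℝ) (Bi : Fin N → ℝ)
    (hY : ∀ s, Y s = u (σ (fσ s)) ^ (2 / (1 - B)))
    (hQ : ∀ s, Q s = (2 / (ϑ ^ 2 * (B - 1))) * P (σ (fσ s))
        * u (σ (fσ s)) ^ (2 * (B + 1) / (B - 1)))
    (hlam : ∀ s, lam s = (2 / (ϑ ^ 2 * (B - 1))) * E (σ (fσ s)))
    (hlami : ∀ i s, lami i s = (2 / (ϑ ^ 2 * (1 - B))) * F i (σ (fσ s)))
    (hBi : ∀ i, Bi i = ((1 - B) * C i + (B + 1)) / 2) :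
    ∀ t, DifferentiableAt ℝ Y (τσ t) ∧ DifferentiableAt ℝ (deriv Y) (τσ t) ∧
      deriv (deriv Y) (τσ t) + Q (τσ t) * Y (τσ t)
        = lam (τσ t) / Y (τσ t) ^ B + ∑ i, lami i (τσ t) / Y (τσ t) ^ Bi i := by
  have hB1' : B - 1 ≠ 0 := sub_ne_zero.mpr hB2
  have h1B' : (1 : ℝ) - B ≠ 0 := sub_ne_zero.mpr (Ne.symm hB2)
  set k : ℝ := 1 / Real.sqrt ϑ with hk
  have hk2 : k ^ 2 = 1 / ϑ := by
    rw [hk, div_pow, one_pow, Real.sq_sqrt hϑ.le]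
  set a : ℝ := 2 / (1 - B) with ha
  set β : ℝ := (B + 1) / (2 * (B - 1)) with hβ
  have hσ'pos : ∀ x, 0 < deriv σ x := by
    intro x
    rw [hσ x]
    have h1 : 0 < k := by rw [hk]; positivity
    exact mul_pos h1 (Real.rpow_pos_of_pos (hupos _) _)
  have hσdiff : ∀ x, DifferentiableAt ℝ σ x := fun x =>
    differentiableAt_of_deriv_ne_zero (hσ'pos x).ne'
  have hτ'pos : ∀ x, 0 < deriv τσ x := fun x => by
    rw [hτσ x]; exact one_div_pos.mpr (hσ'pos x)
  have hτdiff : ∀ x, DifferentiableAt ℝ τσ x := fun x =>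
    differentiableAt_of_deriv_ne_zero (hτ'pos x).ne'
  have hτmono : StrictMono τσ := strictMono_of_deriv_pos hτ'pos
  have hτcont : Continuous τσ := Differentiable.continuous (fun x => hτdiff x)
  have hfσ' : ∀ x, deriv fσ (τσ x) = deriv σ x := by
    intro x
    have h1 : HasDerivAt (fσ ∘ τσ) (deriv fσ (τσ x) * deriv τσ x) x :=
      ((hfσ (τσ x)).hasDerivAt).comp x (hτdiff x).hasDerivAt
    have h2 : HasDerivAt (fσ ∘ τσ) 1 x := by
      have he : fσ ∘ τσ = id := funext hfστσ
      rw [he]; exact hasDerivAt_id x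
    have h3 : deriv fσ (τσ x) * deriv τσ x = 1 := h1.unique h2
    rw [hτσ x] at h3
    field_simp [(hσ'pos x).ne'] at h3
    exact h3
  have hgd : ∀ x, HasDerivAt (fun y => u (σ y) ^ a)
      (a * u (σ x) ^ (a - 1) * (deriv u (σ x) * deriv σ x)) x := by
    intro x
    have h1 : HasDerivAt (fun y => u (σ y)) (deriv u (σ x) * deriv σ x) x :=
      ((hud (σ x)).hasDerivAt).comp x (hσdiff x).hasDerivAt
    have h2 := h1.rpow_const (p := a) (Or.inl (hupos _).ne')
    convert h2 using 1
    ring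
  have hYd : ∀ s, HasDerivAt Y
      (a * u (σ (fσ s)) ^ (a - 1) * (deriv u (σ (fσ s)) * deriv σ (fσ s)) * deriv fσ s) s := by
    intro s
    have h1 : HasDerivAt ((fun y => u (σ y) ^ a) ∘ fσ)
        (a * u (σ (fσ s)) ^ (a - 1) * (deriv u (σ (fσ s)) * deriv σ (fσ s)) * deriv fσ s) s :=
      (hgd (fσ s)).comp s (hfσ s).hasDerivAt
    exact h1.congr_of_eventuallyEq (Filter.Eventually.of_forall fun y => hY y)
  intro t
  set Z : ℝ → ℝ := fun s => a * k ^ 2 * deriv u (σ (fσ s)) with hZdef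
  have hmem : Set.Ioo (τσ (t - 1)) (τσ (t + 1)) ∈ nhds (τσ t) :=
    Ioo_mem_nhds (hτmono (by linarith)) (hτmono (by linarith))
  have hev : deriv Y =ᶠ[nhds (τσ t)] Z := by
    refine Filter.eventuallyEq_of_mem hmem ?_
    intro s hs
    obtain ⟨x, -, rfl⟩ :=
      intermediate_value_Ioo (by linarith : t - 1 ≤ t + 1) hτcont.continuousOn hs
    rw [(hYd (τσ x)).deriv]
    simp only [hZdef, hfστσ x, hfσ' x, hσ x]
    have hcomb : u (σ x) ^ (a - 1) * (u (σ x) ^ β * u (σ x) ^ β) = 1 := by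
      rw [← Real.rpow_add (hupos _), ← Real.rpow_add (hupos _),
        show a - 1 + (β + β) = 0 by rw [ha, hβ]; field_simp; ring]
      exact Real.rpow_zero _
    linear_combination (a * deriv u (σ x) * k ^ 2) * hcomb
  have hZd : HasDerivAt Z
      (a * k ^ 2 * (deriv (deriv u) (σ t) * (deriv σ t * deriv σ t))) (τσ t) := by
    have h1 : HasDerivAt (σ ∘ fσ) (deriv σ (fσ (τσ t)) * deriv fσ (τσ t)) (τσ t) :=
      ((hσdiff _).hasDerivAt).comp _ (hfσ _).hasDerivAt
    have h2 : HasDerivAt (deriv u ∘ σ ∘ fσ)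
        (deriv (deriv u) (σ (fσ (τσ t))) * (deriv σ (fσ (τσ t)) * deriv fσ (τσ t))) (τσ t) :=
      ((hud' _).hasDerivAt).comp _ h1
    have h3 := h2.const_mul (a * k ^ 2)
    rw [hfστσ t, hfσ' t] at h3
    exact h3
  have hdYdiff : DifferentiableAt ℝ (deriv Y) (τσ t) :=
    hZd.differentiableAt.congr_of_eventuallyEq hev
  have hd2 : deriv (deriv Y) (τσ t)
      = a * k ^ 2 * (deriv (deriv u) (σ t) * (deriv σ t * deriv σ t)) := by
    rw [hev.deriv_eq, hZd.deriv]
  refine ⟨(hYd (τσ t)).differentiableAt, hdYdiff, ?_⟩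
  rw [hd2, hQ (τσ t), hY (τσ t), hlam (τσ t)]
  simp only [hlami, hBi, hfστσ t, hσ t]
  set c : ℝ := u (σ t) with hc
  have hcpos : 0 < c := hupos _
  have hN : deriv (deriv u) (σ t)
      = (P (σ t) - E (σ t)) * c + ∑ i, F i (σ t) / c ^ C i := by
    have h := hNLS (σ t)
    rw [← hc] at h
    linear_combination h
  rw [hN]
  set X : ℝ := 2 * B / (B - 1) with hX
  have key1 : ((P (σ t) - E (σ t)) * c + ∑ i, F i (σ t) / c ^ C i) * (k * c ^ β * (k * c ^ β))
      = k ^ 2 * ((P (σ t) - E (σ t)) * c ^ X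
          + ∑ i, F i (σ t) * c ^ ((B + 1) / (B - 1) - C i)) := by
    have hcc : c * (c ^ β * c ^ β) = c ^ X := by
      rw [← Real.rpow_add hcpos, mul_comm, ← Real.rpow_add_one hcpos.ne',
        show β + β + 1 = X by rw [hβ, hX]; field_simp; ring]
    have hss : (∑ i, F i (σ t) / c ^ C i) * (c ^ β * c ^ β)
        = ∑ i, F i (σ t) * c ^ ((B + 1) / (B - 1) - C i) := by
      rw [← Real.rpow_add hcpos, Finset.sum_mul]
      refine Finset.sum_congr rfl fun i _ => ?_
      rw [div_mul_eq_mul_div, mul_div_assoc, ← Real.rpow_sub hcpos,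
        show β + β - C i = (B + 1) / (B - 1) - C i by rw [hβ]; field_simp; ring]
    calc ((P (σ t) - E (σ t)) * c + ∑ i, F i (σ t) / c ^ C i) * (k * c ^ β * (k * c ^ β))
        = k ^ 2 * ((P (σ t) - E (σ t)) * (c * (c ^ β * c ^ β))
            + (∑ i, F i (σ t) / c ^ C i) * (c ^ β * c ^ β)) := by ring
      _ = _ := by rw [hcc, hss]
  have key3 : 2 / (ϑ ^ 2 * (B - 1)) * E (σ t) / (c ^ a) ^ B
      = 2 / (ϑ ^ 2 * (B - 1)) * E (σ t) * c ^ X := by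
    rw [← Real.rpow_mul hcpos.le,
      show a * B = -X by rw [ha, hX]; field_simp; ring,
      Real.rpow_neg hcpos.le]
    field_simp
  have key2s : (∑ i, 2 / (ϑ ^ 2 * (1 - B)) * F i (σ t)
        / (c ^ a) ^ (((1 - B) * C i + (B + 1)) / 2))
      = 2 / (ϑ ^ 2 * (1 - B)) * ∑ i, F i (σ t) * c ^ ((B + 1) / (B - 1) - C i) := by
    rw [Finset.mul_sum]
    refine Finset.sum_congr rfl fun i _ => ?_
    rw [← Real.rpow_mul hcpos.le,
      show a * (((1 - B) * C i + (B + 1)) / 2) = -((B + 1) / (B - 1) - C i) by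
        rw [ha]; field_simp; ring,
      Real.rpow_neg hcpos.le]
    field_simp
  have key4 : 2 / (ϑ ^ 2 * (B - 1)) * P (σ t) * c ^ (2 * (B + 1) / (B - 1)) * c ^ a
      = 2 / (ϑ ^ 2 * (B - 1)) * P (σ t) * c ^ X := by
    have h5 : c ^ (2 * (B + 1) / (B - 1)) * c ^ a = c ^ X := by
      rw [← Real.rpow_add hcpos,
        show 2 * (B + 1) / (B - 1) + a = X by rw [ha, hX]; field_simp; ring]
    linear_combination (2 / (ϑ ^ 2 * (B - 1)) * P (σ t)) * h5
  rw [key1, key3, key2s, key4, hk2, ha]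
  field_simp
  ring
end

section
/- Let N ∈ ℕ and δ, ε, A, A_1, …, A_N ∈ ℝ with A ≠ 2δ. Let a : ℝ → ℝ be twice differentiable with a(t) > 0 for all t, let φ be differentiable, and let G, G_1, …, G_N : ℝ → ℝ satisfy H'(t) + δH(t)² + εφ'(t)² = G(t)/a(t)^A + Σ_{i=1}^N G_i(t)/a(t)^{A_i} for all t, where H = a'/a. Let θ > 0 and q ∈ ℝ \ {δ}; let τ satisfy τ'(t) = θ a(t)^{q−δ} for all t with differentiable inverse f (f(τ(t)) = t); let τ_σ satisfy τ_σ'(t) = (τ'(f(τ_σ(t))))^{(A+2q−2δ)/(4(q−δ))} for all t; let σ satisfy σ'(t) = 1/τ_σ'(t) with differentiable inverse g (g(σ(t)) = t). Define ψ(s) = φ(f(τ_σ(g(s)))), u(s) = a(f(τ_σ(g(s))))^{(2δ−A)/2}, P(s) = (1/2)ε(A−2δ)ψ'(s)², E(s) = ((A−2δ)/2) θ^{A/(q−δ)} G(f(τ_σ(g(s)))), F_i(s) = ((2δ−A)/2) θ^{A/(q−δ)} G_i(f(τ_σ(g(s)))), and C_i = 1 − 2(A_i − 2δ)/(A − 2δ).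 Then for every t ∈ ℝ, at s = σ(t) the function u is twice differentiable and satisfies the Schrödinger-type equation u''(s) + [E(s) − P(s)]u(s) = Σ_{i=1}^N F_i(s)/u(s)^{C_i}. -/
/-!
The three time changes compose to `w = f ∘ τσ ∘ g`, and the chain rule together with the inverse
function rule gives `w' = τ'(w)^(A / (2(q - δ))) = κ a(w)^(A/2)` with `κ = θ^(A / (2(q - δ)))`.
At this speed the exponent of `u = a(w)^((2δ - A)/2)` is exactly the one for which
`u' = ((2δ - A)/2) κ (a' a^(δ-1))(w)`, and since `(a' a^(δ-1))' = a^δ (H' + δH²)` one gets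
`u'' = ((2δ - A)/2) κ² a(w)^A (H' + δH²)(w) u`. Inserting the scale factor equation, the `G` term
is cancelled by `E u`, the `φ'²` term by `P u`, and `a(w)^(A - A_i) u = u^(-C_i)`.
-/

open Function Set

theorem StrictMono.surjective_of_leftInverse {τ f : ℝ → ℝ} (hτ : StrictMono τ)
    (hτc : Continuous τ) (hf : Continuous f) (hfτ : LeftInverse f τ) : Surjective τ := by
  have hrange : range τ = {x | τ (f x) = x} := by
    ext x
    refine ⟨?_, fun hx => ⟨f x, hx⟩⟩
    rintro ⟨t, rfl⟩
    exact congrArg τ (hfτ t)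
  have hclosed : IsClosed (range τ) := hrange ▸ isClosed_eq (hτc.comp hf) continuous_id
  have hbelow : ¬BddBelow (range τ) := fun hb => by
    obtain ⟨t, ht⟩ := hclosed.csInf_mem (range_nonempty τ) hb
    exact (csInf_le hb ⟨t - 1, rfl⟩).not_gt (ht ▸ hτ (sub_one_lt t))
  have habove : ¬BddAbove (range τ) := fun hb => by
    obtain ⟨t, ht⟩ := hclosed.csSup_mem (range_nonempty τ) hb
    exact (le_csSup hb ⟨t + 1, rfl⟩).not_gt (ht ▸ hτ (lt_add_one t))
  exact range_eq_univ.mp ((isPreconnected_range hτc).eq_univ_of_unbounded hbelow habove)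

theorem hasDerivAt_of_leftInverse {τ f : ℝ → ℝ} (hτ : ∀ t, 0 < deriv τ t) (hf : Continuous f)
    (hfτ : LeftInverse f τ) (x : ℝ) : HasDerivAt f (deriv τ (f x))⁻¹ x := by
  have hτd : Differentiable ℝ τ := fun t => differentiableAt_of_deriv_ne_zero (hτ t).ne'
  have hτf : RightInverse f τ := hfτ.rightInverse_of_surjective
    ((strictMono_of_deriv_pos hτ).surjective_of_leftInverse hτd.continuous hf hfτ)
  exact .of_local_left_inverse hf.continuousAt (hτd _).hasDerivAt (hτ _).ne'
    (Filter.Eventually.of_forall hτf)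

theorem hasDerivAt_deriv_mul_rpow {a : ℝ → ℝ} {t : ℝ} (ha : DifferentiableAt ℝ a t)
    (ha' : DifferentiableAt ℝ (deriv a) t) (hat : 0 < a t) (δ : ℝ) :
    HasDerivAt (fun t => deriv a t * a t ^ (δ - 1))
      (a t ^ δ * (deriv (fun t => deriv a t / a t) t + δ * (deriv a t / a t) ^ 2)) t := by
  have hH : deriv (fun t => deriv a t / a t) t
      = (deriv (deriv a) t * a t - deriv a t * deriv a t) / a t ^ 2 :=
    (ha'.hasDerivAt.div ha.hasDerivAt hat.ne').deriv
  refine (ha'.hasDerivAt.mul (ha.hasDerivAt.rpow_const (p := δ - 1) (.inl hat.ne'))).congr_deriv ?_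
  simp only [hH, Real.rpow_sub hat, Real.rpow_one]
  field_simp
  ring

section TimeChange

variable {a w u : ℝ → ℝ} {κ δ A : ℝ}

theorem hasDerivAt_of_eq_rpow_comp (ha : Differentiable ℝ a) (hapos : ∀ t, 0 < a t)
    (hw : ∀ s, HasDerivAt w (κ * a (w s) ^ (A / 2)) s)
    (hu : ∀ s, u s = a (w s) ^ ((2 * δ - A) / 2)) (s : ℝ) :
    HasDerivAt u ((2 * δ - A) / 2 * κ * (deriv a (w s) * a (w s) ^ (δ - 1))) s := by
  rw [show u = fun s => a (w s) ^ ((2 * δ - A) / 2) from funext hu]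
  refine (((ha (w s)).hasDerivAt.comp s (hw s)).rpow_const (p := (2 * δ - A) / 2)
    (.inl (hapos (w s)).ne')).congr_deriv ?_
  have hexp : a (w s) ^ (A / 2) * a (w s) ^ ((2 * δ - A) / 2 - 1) = a (w s) ^ (δ - 1) := by
    rw [← Real.rpow_add (hapos _)]; ring_nf
  rw [Function.comp_apply]
  linear_combination (2 * δ - A) / 2 * κ * deriv a (w s) * hexp

theorem hasDerivAt_deriv_of_eq_rpow_comp (ha : Differentiable ℝ a)
    (ha' : Differentiable ℝ (deriv a)) (hapos : ∀ t, 0 < a t)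
    (hw : ∀ s, HasDerivAt w (κ * a (w s) ^ (A / 2)) s)
    (hu : ∀ s, u s = a (w s) ^ ((2 * δ - A) / 2)) (s : ℝ) :
    HasDerivAt (deriv u) ((2 * δ - A) / 2 * κ ^ 2 * a (w s) ^ A
      * (deriv (fun t => deriv a t / a t) (w s) + δ * (deriv a (w s) / a (w s)) ^ 2) * u s) s := by
  rw [funext fun s => (hasDerivAt_of_eq_rpow_comp ha hapos hw hu s).deriv]
  refine (((hasDerivAt_deriv_mul_rpow (ha _) (ha' _) (hapos (w s)) δ).comp s (hw s)).const_mul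
    ((2 * δ - A) / 2 * κ)).congr_deriv ?_
  have hexp : a (w s) ^ δ * a (w s) ^ (A / 2) = a (w s) ^ A * a (w s) ^ ((2 * δ - A) / 2) := by
    rw [← Real.rpow_add (hapos _), ← Real.rpow_add (hapos _)]; ring_nf
  rw [hu]
  linear_combination ((2 * δ - A) / 2 * κ ^ 2
    * (deriv (fun t => deriv a t / a t) (w s) + δ * (deriv a (w s) / a (w s)) ^ 2)) * hexp

end TimeChange

theorem hasDerivAt_timeChange_comp {τ f τσ g : ℝ → ℝ} {e : ℝ} (hτ : ∀ t, 0 < deriv τ t)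
    (hf : ∀ x, HasDerivAt f (deriv τ (f x))⁻¹ x) (hτσ : Differentiable ℝ τσ)
    (hτσ' : ∀ t, deriv τσ t = deriv τ (f (τσ t)) ^ e)
    (hg : ∀ s, HasDerivAt g (deriv τσ (g s)) s) (s : ℝ) :
    HasDerivAt (fun s => f (τσ (g s))) (deriv τ (f (τσ (g s))) ^ (2 * e - 1)) s := by
  refine ((hf _).comp s ((hτσ _).hasDerivAt.comp s (hg s))).congr_deriv ?_
  have hpos := hτ (f (τσ (g s)))
  rw [Function.comp_apply, hτσ' (g s), Real.rpow_sub hpos, Real.rpow_one, two_mul, Real.rpow_add hpos]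
  field_simp

theorem Real.mul_rpow_rpow_div {θ b K : ℝ} (hθ : 0 ≤ θ) (hb : 0 ≤ b) (hK : K ≠ 0) (A : ℝ) :
    (θ * b ^ K) ^ (A / (2 * K)) = θ ^ (A / (2 * K)) * b ^ (A / 2) := by
  rw [Real.mul_rpow hθ (Real.rpow_nonneg hb _), ← Real.rpow_mul hb]
  congr 2
  field_simp

theorem schrodinger_eq_of_scaleFactor_eq {ι : Type*} [Fintype ι] {δ ε A κ b X Φ g : ℝ} {Ai Gi : ι → ℝ}
    (hA : A ≠ 2 * δ) (hb : 0 < b) (hX : X + ε * Φ ^ 2 = g / b ^ A + ∑ i, Gi i / b ^ Ai i) :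
    (2 * δ - A) / 2 * κ ^ 2 * b ^ A * X * b ^ ((2 * δ - A) / 2)
      + ((A - 2 * δ) / 2 * κ ^ 2 * g - 1 / 2 * ε * (A - 2 * δ) * (Φ * (κ * b ^ (A / 2))) ^ 2)
        * b ^ ((2 * δ - A) / 2)
      = ∑ i, (2 * δ - A) / 2 * κ ^ 2 * Gi i
        / (b ^ ((2 * δ - A) / 2)) ^ (1 - 2 * (Ai i - 2 * δ) / (A - 2 * δ)) := by
  have hA' : A - 2 * δ ≠ 0 := sub_ne_zero.mpr hA
  have hbA : b ^ A ≠ 0 := (Real.rpow_pos_of_pos hb A).ne'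
  have hhalf : (b ^ (A / 2)) ^ 2 = b ^ A := by
    rw [← Real.rpow_natCast, ← Real.rpow_mul hb.le]; norm_num
  have hpow : ∀ i, (b ^ ((2 * δ - A) / 2)) ^ (1 - 2 * (Ai i - 2 * δ) / (A - 2 * δ))
      = b ^ Ai i / (b ^ ((2 * δ - A) / 2) * b ^ A) := fun i => by
    rw [← Real.rpow_mul hb.le, ← Real.rpow_add hb, ← Real.rpow_sub hb]
    congr 1
    field_simp
    ring
  calc _ = (2 * δ - A) / 2 * κ ^ 2 * (b ^ ((2 * δ - A) / 2) * b ^ A) * ∑ i, Gi i / b ^ Ai i := by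
        rw [show X = g / b ^ A + ∑ i, Gi i / b ^ Ai i - ε * Φ ^ 2 by linarith, mul_pow, mul_pow,
          hhalf]
        field_simp
        ring
    _ = _ := by
      rw [Finset.mul_sum]
      refine Finset.sum_congr rfl fun i _ => ?_
      rw [hpow, div_div_eq_mul_div]
      ring

/-- from the scale factor equation directly to a Schrödinger-type equation. -/
theorem stmt_4
    (N : ℕ) (δ ε A : ℝ) (Ai : Fin N → ℝ) (hA : A ≠ 2 * δ)
    (a φ G : ℝ → ℝ) (Gi : Fin N → ℝ → ℝ)
    (ha : Differentiable ℝ a) (ha' : Differentiable ℝ (deriv a))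
    (hapos : ∀ t, 0 < a t)
    (hφ : Differentiable ℝ φ)
    (hSF : ∀ t, deriv (fun t => deriv a t / a t) t + δ * (deriv a t / a t) ^ 2
        + ε * (deriv φ t) ^ 2
        = G t / a t ^ A + ∑ i, Gi i t / a t ^ Ai i)
    (θ q : ℝ) (hθ : 0 < θ) (hq : q ≠ δ)
    (τ f τσ σ g : ℝ → ℝ)
    (hτ : ∀ t, deriv τ t = θ * a t ^ (q - δ))
    (hf : Differentiable ℝ f) (hfτ : ∀ t, f (τ t) = t)
    (hτσ : ∀ t, deriv τσ t
        = (deriv τ (f (τσ t))) ^ ((A + 2 * q - 2 * δ) / (4 * (q - δ))))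
    (hσ : ∀ t, deriv σ t = 1 / deriv τσ t)
    (hg : Differentiable ℝ g) (hgσ : ∀ t, g (σ t) = t)
    (ψ u P E : ℝ → ℝ) (F : Fin N → ℝ → ℝ) (C : Fin N → ℝ)
    (hψ : ∀ s, ψ s = φ (f (τσ (g s))))
    (hu : ∀ s, u s = a (f (τσ (g s))) ^ ((2 * δ - A) / 2))
    (hP : ∀ s, P s = (1 / 2) * ε * (A - 2 * δ) * (deriv ψ s) ^ 2)
    (hE : ∀ s, E s = ((A - 2 * δ) / 2) * θ ^ (A / (q - δ)) * G (f (τσ (g s))))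
    (hF : ∀ i s, F i s = ((2 * δ - A) / 2) * θ ^ (A / (q - δ)) * Gi i (f (τσ (g s))))
    (hC : ∀ i, C i = 1 - 2 * (Ai i - 2 * δ) / (A - 2 * δ)) :
    ∀ t, DifferentiableAt ℝ u (σ t) ∧ DifferentiableAt ℝ (deriv u) (σ t) ∧
      deriv (deriv u) (σ t) + (E (σ t) - P (σ t)) * u (σ t)
        = ∑ i, F i (σ t) / u (σ t) ^ C i := by
  have hK : q - δ ≠ 0 := sub_ne_zero.mpr hq
  have hτ' : ∀ t, 0 < deriv τ t := fun t => by
    rw [hτ]; exact mul_pos hθ (Real.rpow_pos_of_pos (hapos t) _)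
  have hτσ' : ∀ t, 0 < deriv τσ t := fun t => by rw [hτσ]; exact Real.rpow_pos_of_pos (hτ' _) _
  have hσ' : ∀ t, 0 < deriv σ t := fun t => by rw [hσ]; exact one_div_pos.mpr (hτσ' t)
  have hg' : ∀ s, HasDerivAt g (deriv τσ (g s)) s := fun s => by
    simpa [hσ] using hasDerivAt_of_leftInverse hσ' hg.continuous hgσ s
  have hw : ∀ s, HasDerivAt (fun s => f (τσ (g s)))
      (θ ^ (A / (2 * (q - δ))) * a (f (τσ (g s))) ^ (A / 2)) s := fun s => by
    have := hasDerivAt_timeChange_comp hτ' (hasDerivAt_of_leftInverse hτ' hf.continuous hfτ)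
      (fun t => differentiableAt_of_deriv_ne_zero (hτσ' t).ne') hτσ hg' s
    rwa [show 2 * ((A + 2 * q - 2 * δ) / (4 * (q - δ))) - 1 = A / (2 * (q - δ)) by
      field_simp; ring, hτ, Real.mul_rpow_rpow_div hθ.le (hapos _).le hK] at this
  have hκ : (θ ^ (A / (2 * (q - δ)))) ^ 2 = θ ^ (A / (q - δ)) := by
    rw [← Real.rpow_natCast, ← Real.rpow_mul hθ.le]; congr 1; field_simp; ring
  intro t
  have hu'' := hasDerivAt_deriv_of_eq_rpow_comp ha ha' hapos hw hu (σ t)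
  refine ⟨(hasDerivAt_of_eq_rpow_comp ha hapos hw hu (σ t)).differentiableAt,
    hu''.differentiableAt, ?_⟩
  have hψ' : deriv ψ (σ t) = deriv φ (f (τσ (g (σ t))))
      * (θ ^ (A / (2 * (q - δ))) * a (f (τσ (g (σ t)))) ^ (A / 2)) := by
    rw [funext hψ]; exact ((hφ _).hasDerivAt.comp _ (hw _)).deriv
  rw [hu''.deriv, hE, hP, hψ']
  simp only [hF, hC, hu, ← hκ]
  exact schrodinger_eq_of_scaleFactor_eq hA (hapos _) (hSF _)
end

section
/- Let N ∈ ℕ, C_1, …, C_N ∈ ℝ, ϑ > 0, n ∈ ℝ \ {0}, m ∈ ℝ \ {−2}, and ε, q ∈ ℝ \ {0}. Let u : ℝ → ℝ be twice differentiable with u(s) > 0 for all s, let P be continuous, and let E, F_1, …, F_N : ℝ → ℝ satisfy u''(s) + [E(s) − P(s)]u(s) = Σ_{i=1}^N F_i(s)/u(s)^{C_i} for all s. Let σ satisfy σ'(t) = (1/√ϑ) u(σ(t))^{(n+6)/(2n)} for all t; let τ_σ satisfy τ_σ'(t) = 1/σ'(t) with differentiable inverse f_σ (f_σ(τ_σ(t))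 = t); let τ satisfy τ'(t) = (τ_σ'(f_σ(τ(t))))^{4/(m+2)} for all t; and let ψ be differentiable with ψ'(s)² = (6/(εqn)) P(s) for all s. Define a(t) = u(σ(f_σ(τ(t))))^{−6/(qn)}, φ(t) = ψ(σ(f_σ(τ(t)))), G(t) = (6/(qn)) ϑ^{−2m/(m+2)} E(σ(f_σ(τ(t)))), G_i(t) = −(6/(qn)) ϑ^{−2m/(m+2)} F_i(σ(f_σ(τ(t)))), δ = q(3m−n)/(3(m+2)), A = qm(n+6)/(3(m+2)), and A_i = (q/6)((nm − 2n + 12m)/(m+2) − n C_i). Then a is positive and twice differentiable, and H'(t) + δH(t)² + εφ'(t)² = G(t)/a(t)^A + Σ_{i=1}^N G_i(t)/a(t)^{A_i} holds for all t ∈ ℝ, where H = a'/a. -/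
open Filter Set Topology

set_option maxHeartbeats 2000000 in
/-- from a Schrödinger-type equation back to the scale factor equation. -/
theorem stmt_5
    (N : ℕ) (C : Fin N → ℝ) (ϑ n m ε q : ℝ)
    (hϑ : 0 < ϑ) (hn : n ≠ 0) (hm : m ≠ -2) (hε : ε ≠ 0) (hq : q ≠ 0)
    (u P E : ℝ → ℝ) (F : Fin N → ℝ → ℝ)
    (hud : Differentiable ℝ u) (hud' : Differentiable ℝ (deriv u))
    (hupos : ∀ s, 0 < u s)
    (hPc : Continuous P)
    (hNLS : ∀ s, deriv (deriv u) s + (E s - P s) * u s = ∑ i, F i s / u s ^ C i)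
    (σ τσ fσ τ ψ : ℝ → ℝ)
    (hσ : ∀ t, deriv σ t = (1 / Real.sqrt ϑ) * u (σ t) ^ ((n + 6) / (2 * n)))
    (hτσ : ∀ t, deriv τσ t = 1 / deriv σ t)
    (hfσ : Differentiable ℝ fσ) (hfστσ : ∀ t, fσ (τσ t) = t)
    (hτ : ∀ t, deriv τ t = (deriv τσ (fσ (τ t))) ^ (4 / (m + 2)))
    (hψd : Differentiable ℝ ψ)
    (hψ : ∀ s, (deriv ψ s) ^ 2 = (6 / (ε * q * n)) * P s)
    (a φ G : ℝ → ℝ) (Gi : Fin N → ℝ → ℝ) (δ A : ℝ) (Ai : Fin N → ℝ)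
    (ha : ∀ t, a t = u (σ (fσ (τ t))) ^ (-6 / (q * n)))
    (hφ : ∀ t, φ t = ψ (σ (fσ (τ t))))
    (hG : ∀ t, G t = (6 / (q * n)) * ϑ ^ (-2 * m / (m + 2)) * E (σ (fσ (τ t))))
    (hGi : ∀ i t, Gi i t = -(6 / (q * n)) * ϑ ^ (-2 * m / (m + 2)) * F i (σ (fσ (τ t))))
    (hδ : δ = q * (3 * m - n) / (3 * (m + 2)))
    (hA : A = q * m * (n + 6) / (3 * (m + 2)))
    (hAi : ∀ i, Ai i = (q / 6) * ((n * m - 2 * n + 12 * m) / (m + 2) - n * C i)) :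
    (∀ t, 0 < a t) ∧ Differentiable ℝ a ∧ Differentiable ℝ (deriv a) ∧
      ∀ t, deriv (fun t => deriv a t / a t) t + δ * (deriv a t / a t) ^ 2
          + ε * (deriv φ t) ^ 2 = G t / a t ^ A + ∑ i, Gi i t / a t ^ Ai i := by
  have hm2 : m + 2 ≠ 0 := fun h => hm (by linarith)
  -- basic derivative positivity / differentiability
  have hσpos : ∀ t, 0 < deriv σ t := by
    intro t; rw [hσ]
    exact mul_pos (by positivity) (Real.rpow_pos_of_pos (hupos _) _)
  have hσdiff : Differentiable ℝ σ := fun t =>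
    differentiableAt_of_deriv_ne_zero (hσpos t).ne'
  have hτσpos : ∀ t, 0 < deriv τσ t := by
    intro t; rw [hτσ]
    exact div_pos one_pos (hσpos t)
  have hτσdiff : Differentiable ℝ τσ := fun t =>
    differentiableAt_of_deriv_ne_zero (hτσpos t).ne'
  have hτpos : ∀ t, 0 < deriv τ t := by
    intro t; rw [hτ]; exact Real.rpow_pos_of_pos (hτσpos _) _
  have hτdiff : Differentiable ℝ τ := fun t =>
    differentiableAt_of_deriv_ne_zero (hτpos t).ne'
  -- τσ is strictly monotone and surjective
  have hmono : StrictMono τσ := strictMono_of_deriv_pos hτσpos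
  have hsurj : Function.Surjective τσ := by
    have hc : Continuous τσ := hτσdiff.continuous
    have hcf : Continuous fσ := hfσ.continuous
    have hcomp : (fun t => fσ (τσ t)) = id := funext hfστσ
    have hnb : ¬ BddAbove (Set.range τσ) := by
      intro hb
      have h1 : Tendsto τσ atTop (𝓝 (⨆ t, τσ t)) := tendsto_atTop_ciSup hmono.monotone hb
      have h2 : Tendsto (fun t => fσ (τσ t)) atTop (𝓝 (fσ (⨆ t, τσ t))) :=
        (hcf.tendsto _).comp h1
      rw [hcomp] at h2
      exact not_tendsto_nhds_of_tendsto_atTop tendsto_id _ h2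
    have hnb' : ¬ BddBelow (Set.range τσ) := by
      intro hb
      have h1 : Tendsto τσ atBot (𝓝 (⨅ t, τσ t)) := tendsto_atBot_ciInf hmono.monotone hb
      have h2 : Tendsto (fun t => fσ (τσ t)) atBot (𝓝 (fσ (⨅ t, τσ t))) :=
        (hcf.tendsto _).comp h1
      rw [hcomp] at h2
      exact not_tendsto_nhds_of_tendsto_atBot tendsto_id _ h2
    intro y
    obtain ⟨z, hz, hyz⟩ := not_bddAbove_iff.1 hnb y
    obtain ⟨w, hw, hwy⟩ := not_bddBelow_iff.1 hnb' y
    obtain ⟨b, rfl⟩ := hz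
    obtain ⟨c, rfl⟩ := hw
    exact intermediate_value_univ c b hc ⟨hwy.le, hyz.le⟩
  have hτστσ : ∀ y, τσ (fσ y) = y := by
    intro y; obtain ⟨x, rfl⟩ := hsurj y; rw [hfστσ]
  -- derivative of fσ
  have hfσderiv : ∀ y, HasDerivAt fσ (deriv σ (fσ y)) y := by
    intro y
    have h1 : HasDerivAt τσ (deriv τσ (fσ y)) (fσ y) := (hτσdiff _).hasDerivAt
    have h2 : HasDerivAt fσ (deriv fσ y) (τσ (fσ y)) := by
      rw [hτστσ]; exact (hfσ y).hasDerivAt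
    have h3 := h2.comp (fσ y) h1
    have h4 : (fσ ∘ τσ) = id := funext hfστσ
    rw [h4] at h3
    have h5 : deriv fσ y * deriv τσ (fσ y) = 1 := h3.unique (hasDerivAt_id _)
    have h6 : deriv fσ y = deriv σ (fσ y) := by
      rw [hτσ] at h5
      have := (hσpos (fσ y)).ne'
      field_simp at h5
      linarith
    rw [← h6]; exact (hfσ y).hasDerivAt
  -- the composite time change
  set g : ℝ → ℝ := fun t => σ (fσ (τ t)) with hgdef
  set β : ℝ := m * (n + 6) / (n * (m + 2)) with hβdef
  set c1 : ℝ := ϑ ^ (-m / (m + 2)) with hc1def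
  set p : ℝ := -6 / (q * n) with hpdef
  have hc1pos : 0 < c1 := Real.rpow_pos_of_pos hϑ _
  have hg : ∀ t, HasDerivAt g (c1 * u (g t) ^ β) t := by
    intro t
    set v : ℝ := deriv σ (fσ (τ t)) with hvdef
    have hv : 0 < v := hσpos _
    have hW : 0 < u (g t) := hupos _
    have h1 : HasDerivAt τ (v ^ (-(4 / (m + 2)))) t := by
      have h := (hτdiff t).hasDerivAt
      have he : deriv τ t = v ^ (-(4 / (m + 2))) := by
        rw [hτ t, hτσ, one_div, Real.inv_rpow hv.le, ← Real.rpow_neg hv.le]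
      rwa [he] at h
    have h2 : HasDerivAt fσ v (τ t) := hfσderiv (τ t)
    have h3 : HasDerivAt (fσ ∘ τ) (v * v ^ (-(4 / (m + 2)))) t := h2.comp t h1
    have h4 : HasDerivAt σ v (fσ (τ t)) := (hσdiff _).hasDerivAt
    have h5 : HasDerivAt (σ ∘ (fσ ∘ τ)) (v * (v * v ^ (-(4 / (m + 2))))) t := h4.comp t h3
    have hval : v * (v * v ^ (-(4 / (m + 2)))) = c1 * u (g t) ^ β := by
      have hexp : (2 * m / (m + 2) : ℝ) = 1 + (1 + -(4 / (m + 2))) := by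
        field_simp; ring
      have h2e : v * (v * v ^ (-(4 / (m + 2)))) = v ^ (2 * m / (m + 2)) := by
        rw [hexp, Real.rpow_add hv, Real.rpow_add hv, Real.rpow_one]
      have hv2 : v = (1 / Real.sqrt ϑ) * u (g t) ^ ((n + 6) / (2 * n)) := by
        rw [hvdef, hσ]
      rw [h2e, hv2, Real.mul_rpow (by positivity) (Real.rpow_pos_of_pos hW _).le]
      have hsq : ((1 / Real.sqrt ϑ) : ℝ) ^ ((2 * m / (m + 2)) : ℝ) = c1 := by
        rw [one_div, Real.sqrt_eq_rpow, ← Real.rpow_neg hϑ.le, ← Real.rpow_mul hϑ.le,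
          hc1def]
        congr 1
        field_simp
      have hk : (u (g t) ^ ((n + 6) / (2 * n) : ℝ)) ^ ((2 * m / (m + 2)) : ℝ)
          = u (g t) ^ β := by
        rw [← Real.rpow_mul hW.le, hβdef,
          show ((n + 6) / (2 * n) * (2 * m / (m + 2)) : ℝ) = m * (n + 6) / (n * (m + 2)) by
            field_simp]
      rw [hsq, hk]
    exact hval ▸ h5
  -- basic positivity and the scale factor
  have hWpos : ∀ t, 0 < u (g t) := fun t => hupos _
  have haU : ∀ t, a t = u (g t) ^ p := ha
  have hapos : ∀ t, 0 < a t := fun t => by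
    rw [haU t]; exact Real.rpow_pos_of_pos (hWpos t) _
  have hU : ∀ t, HasDerivAt (fun t => u (g t)) (deriv u (g t) * (c1 * u (g t) ^ β)) t :=
    fun t => (hud (g t)).hasDerivAt.comp t (hg t)
  have haderiv : ∀ t, HasDerivAt a (p * c1 * (deriv u (g t) * u (g t) ^ (β + p - 1))) t := by
    intro t
    have h := (hU t).rpow_const (p := p) (Or.inl (hWpos t).ne')
    have hfun : a = fun t => u (g t) ^ p := funext haU
    rw [← hfun] at h
    have e1 : u (g t) ^ β * u (g t) ^ (p - 1) = u (g t) ^ (β + p - 1) := by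
      rw [← Real.rpow_add (hWpos t)]; ring_nf
    have hval : deriv u (g t) * (c1 * u (g t) ^ β) * p * u (g t) ^ (p - 1)
        = p * c1 * (deriv u (g t) * u (g t) ^ (β + p - 1)) := by
      linear_combination (deriv u (g t) * c1 * p) * e1
    rwa [hval] at h
  have hderiva : ∀ t, deriv a t = p * c1 * (deriv u (g t) * u (g t) ^ (β + p - 1)) :=
    fun t => (haderiv t).deriv
  have hadiff : Differentiable ℝ a := fun t => (haderiv t).differentiableAt
  have hadiff2 : Differentiable ℝ (deriv a) := by
    have hfun : deriv a = fun t => p * c1 * (deriv u (g t) * u (g t) ^ (β + p - 1)) :=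
      funext hderiva
    rw [hfun]
    intro t
    have h1 := (hud' (g t)).hasDerivAt.comp t (hg t)
    have h2 := (hU t).rpow_const (p := β + p - 1) (Or.inl (hWpos t).ne')
    exact ((h1.mul h2).const_mul (p * c1)).differentiableAt
  -- the Hubble function
  have hHval : ∀ t, deriv a t / a t = p * c1 * (deriv u (g t) * u (g t) ^ (β - 1)) := by
    intro t
    have h0 : u (g t) ^ p ≠ 0 := (Real.rpow_pos_of_pos (hWpos t) p).ne'
    rw [hderiva t, haU t,
      show (β + p - 1 : ℝ) = (β - 1) + p by ring, Real.rpow_add (hWpos t)]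
    field_simp
  have hHfun : (fun t => deriv a t / a t)
      = fun t => p * c1 * (deriv u (g t) * u (g t) ^ (β - 1)) := funext hHval
  have hH' : ∀ t, deriv (fun t => deriv a t / a t) t
      = p * c1 * (deriv (deriv u) (g t) * (c1 * u (g t) ^ β) * u (g t) ^ (β - 1)
        + deriv u (g t) * (deriv u (g t) * (c1 * u (g t) ^ β) * (β - 1) * u (g t) ^ (β - 1 - 1))) := by
    intro t
    rw [hHfun]
    have h1 : HasDerivAt (fun t => deriv u (g t))
        (deriv (deriv u) (g t) * (c1 * u (g t) ^ β)) t :=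
      (hud' (g t)).hasDerivAt.comp t (hg t)
    have h2 : HasDerivAt (fun t => u (g t) ^ (β - 1))
        (deriv u (g t) * (c1 * u (g t) ^ β) * (β - 1) * u (g t) ^ (β - 1 - 1)) t :=
      (hU t).rpow_const (Or.inl (hWpos t).ne')
    exact ((h1.mul h2).const_mul (p * c1)).deriv
  have hφ' : ∀ t, deriv φ t = deriv ψ (g t) * (c1 * u (g t) ^ β) := by
    intro t
    have hfun : φ = fun t => ψ (g t) := funext hφ
    rw [hfun]
    exact ((hψd (g t)).hasDerivAt.comp t (hg t)).deriv
  -- restated data along g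
  have hG' : ∀ t, G t = (6 / (q * n)) * ϑ ^ (-2 * m / (m + 2)) * E (g t) := hG
  have hGi' : ∀ i t, Gi i t = -(6 / (q * n)) * ϑ ^ (-2 * m / (m + 2)) * F i (g t) := hGi
  -- scalar identities
  have hcoef : β - 1 + δ * p = 0 := by
    rw [hδ, hpdef, hβdef]; field_simp; ring
  have hc1sq : c1 ^ 2 = ϑ ^ (-2 * m / (m + 2)) := by
    rw [hc1def, sq, ← Real.rpow_add hϑ]; congr 1; ring
  have hpA : p * A = -(2 * β) := by
    rw [hA, hpdef, hβdef]; field_simp; ring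
  have hpAi : ∀ i, p * Ai i = C i + 1 - 2 * β := by
    intro i; rw [hAi i, hpdef, hβdef]; field_simp; ring
  refine ⟨hapos, hadiff, hadiff2, fun t => ?_⟩
  set W := u (g t) with hWdef
  have hW : 0 < W := hWpos t
  set B := W ^ β with hBdef
  have hB : 0 < B := Real.rpow_pos_of_pos hW _
  -- rpow bookkeeping
  have e1 : W ^ (β - 1) = B / W := by
    have hW1 : W ^ (β - 1) * W ^ (1:ℝ) = W ^ β := by
      rw [← Real.rpow_add hW]; congr 1; ring
    rw [Real.rpow_one] at hW1
    rw [hBdef, eq_div_iff hW.ne']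
    exact hW1
  have e2 : W ^ (β - 1 - 1) = B / (W * W) := by
    have hW2 : W ^ (β - 1 - 1) * (W ^ (1:ℝ) * W ^ (1:ℝ)) = W ^ β := by
      rw [← Real.rpow_add hW, ← Real.rpow_add hW]; congr 1; ring
    rw [Real.rpow_one] at hW2
    rw [hBdef, eq_div_iff (by positivity : W * W ≠ 0)]
    exact hW2
  have e4 : a t ^ A = (B * B)⁻¹ := by
    rw [haU t, ← Real.rpow_mul hW.le, hpA, hBdef, ← Real.rpow_add hW,
      ← Real.rpow_neg hW.le]
    congr 1; ring
  have e5 : ∀ i, a t ^ Ai i = (W ^ C i) * W / (B * B) := by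
    intro i
    have h2 : W ^ (C i + 1 - 2 * β) * W ^ (β + β) = W ^ C i * W := by
      rw [← Real.rpow_add hW,
        show C i + 1 - 2 * β + (β + β) = C i + 1 by ring,
        Real.rpow_add hW, Real.rpow_one]
    rw [haU t, ← Real.rpow_mul hW.le, hpAi i, hBdef, ← Real.rpow_add hW,
      eq_div_iff (by positivity : W ^ (β + β) ≠ 0)]
    exact h2
  -- rewrite everything
  rw [hH' t, hHval t, hφ' t, hG' t, e4, ← hc1sq, ← hWdef, ← hBdef, e1, e2]
  -- handle the sum on the right
  have hS2 : ∑ i, Gi i t / a t ^ Ai i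
      = p * c1 ^ 2 * ((B * B) / W) * (∑ i, F i (g t) / W ^ C i) := by
    rw [Finset.mul_sum]
    refine Finset.sum_congr rfl fun i _ => ?_
    rw [hGi' i t, e5 i, ← hc1sq, hpdef]
    have hY : (0:ℝ) < W ^ C i := Real.rpow_pos_of_pos hW _
    field_simp
  rw [hS2]
  -- use the Schrödinger equation and the ψ equation
  have hNLSt : deriv (deriv u) (g t)
      = (∑ i, F i (g t) / W ^ C i) - (E (g t) - P (g t)) * W := by
    have := hNLS (g t); rw [← hWdef] at this; linarith
  have hψterm : ε * (deriv ψ (g t) * (c1 * B)) ^ 2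
      = 6 / (q * n) * P (g t) * (c1 ^ 2 * (B * B)) := by
    rw [mul_pow, hψ (g t)]
    field_simp
  rw [hNLSt, hψterm]
  -- now a pure field identity
  rw [hδ, hpdef, hβdef] at hcoef ⊢
  field_simp
  ring
end

section
/- Let N ∈ ℕ and ε, A, A_1, …, A_N ∈ ℝ with A ≠ 0. Let a : ℝ → ℝ be twice differentiable with a(t) > 0 for all t, let φ be differentiable, and let G, G_1, …, G_N : ℝ → ℝ satisfy H'(t) + εφ'(t)² = G(t)/a(t)^A + Σ_{i=1}^N G_i(t)/a(t)^{A_i} for all t, where H = a'/a. Let θ > 0, let σ satisfy σ'(t) = (1/θ) a(t)^{−A/2} for all t, and let g be a differentiable inverse of σ (g(σ(t)) = t for all t). Define u(s) = a(g(s))^{−A/2}, ψ(s) = φ(g(s)), P(s) = (εA/2)ψ'(s)², E(s) = (θ²A/2) G(g(s)), F_i(s) = −(θ²A/2) G_i(g(s)), and C_i = 1 − 2A_i/A. Then for every t ∈ ℝ, at s = σ(t) the function u is twice differentiable and satisfies the Schrödinger-type equation u''(s) + [E(s) − P(s)]u(s) = Σ_{i=1}^N F_i(s)/u(s)^{C_i}.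 -/
/-!
Since `g` inverts `σ`, `g'(σ t) = θ a(t)^(A/2)`, and the chain rule gives
`u'(s) = -(Aθ/2) H(g s)` for every `s` in the range of `σ`. That range is open (`σ` is continuous
and strictly increasing), so `u'` can be differentiated once more there:
`u''(σ t) = -(Aθ²/2) H'(t) a(t)^(A/2)`. Eliminating `H'` through the equation for `H' + εφ'²`
leaves exactly the sum over `i`, because `(a^(-A/2))^(C_i) = a^(A_i - A/2)`.
-/

open Filter Function Set Topology

theorem StrictMono.range_mem_nhds {α δ : Type*} [ConditionallyCompleteLinearOrder α]
    [TopologicalSpace α] [OrderTopology α] [DenselyOrdered α] [NoMinOrder α] [NoMaxOrder α]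
    [LinearOrder δ] [TopologicalSpace δ] [OrderTopology δ] {f : α → δ}
    (hf : StrictMono f) (hfc : Continuous f) (x : α) : range f ∈ 𝓝 (f x) := by
  obtain ⟨l, hl⟩ := exists_lt x
  obtain ⟨r, hr⟩ := exists_gt x
  exact mem_of_superset (Ioo_mem_nhds (hf hl) (hf hr))
    ((intermediate_value_Ioo (hl.trans hr).le hfc.continuousOn).trans (image_subset_range _ _))

theorem Function.LeftInverse.hasDerivAt {𝕜 : Type*} [NontriviallyNormedField 𝕜]
    {g σ : 𝕜 → 𝕜} {σ' t : 𝕜} (hgσ : LeftInverse g σ)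
    (hg : DifferentiableAt 𝕜 g (σ t)) (hσ : HasDerivAt σ σ' t) : HasDerivAt g σ'⁻¹ (σ t) := by
  have h := hg.hasDerivAt.comp t hσ
  rw [hgσ.comp_eq_id] at h
  rw [← eq_inv_of_mul_eq_one_left ((hasDerivAt_id t).unique h).symm]
  exact hg.hasDerivAt

theorem DifferentiableAt.hasDerivAt_comp_of_leftInverse {f g σ : ℝ → ℝ} {g' t : ℝ}
    (hf : DifferentiableAt ℝ f t) (hgσ : LeftInverse g σ) (hg : HasDerivAt g g' (σ t)) :
    HasDerivAt (fun s => f (g s)) (deriv f t * g') (σ t) := by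
  rw [← hgσ t] at hf
  have h := hf.hasDerivAt.comp (σ t) hg
  rwa [hgσ t] at h

section TimeChange

variable {a g σ : ℝ → ℝ} {θ A : ℝ}

theorem hasDerivAt_rpow_comp_of_hasDerivAt_inverse (ha : Differentiable ℝ a)
    (hapos : ∀ t, 0 < a t) (hgσ : LeftInverse g σ)
    (hg' : ∀ t, HasDerivAt g (θ * a t ^ (A / 2)) (σ t)) (t : ℝ) :
    HasDerivAt (fun s => a (g s) ^ (-A / 2)) (-(A * θ / 2) * (deriv a t / a t)) (σ t) := by
  have h := ((ha t).hasDerivAt_comp_of_leftInverse hgσ (hg' t)).rpow_const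
    (p := -A / 2) (Or.inl (by rw [hgσ t]; exact (hapos t).ne'))
  convert h using 1
  rw [hgσ t]
  have hpow : a t ^ (A / 2) * a t ^ (-A / 2 - 1) = (a t)⁻¹ := by
    rw [← Real.rpow_add (hapos t), show A / 2 + (-A / 2 - 1) = -1 by ring, Real.rpow_neg_one]
  linear_combination (deriv a t * θ * A / 2) * hpow

theorem hasDerivAt_deriv_rpow_comp_of_hasDerivAt_inverse (ha : Differentiable ℝ a)
    (ha' : Differentiable ℝ (deriv a)) (hapos : ∀ t, 0 < a t) (hgσ : LeftInverse g σ)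
    (hg' : ∀ t, HasDerivAt g (θ * a t ^ (A / 2)) (σ t)) {t : ℝ}
    (hrange : range σ ∈ 𝓝 (σ t)) :
    HasDerivAt (deriv fun s => a (g s) ^ (-A / 2))
      (-(A * θ / 2) * (deriv (fun t => deriv a t / a t) t * (θ * a t ^ (A / 2)))) (σ t) := by
  have heq : (deriv fun s => a (g s) ^ (-A / 2))
      =ᶠ[𝓝 (σ t)] fun s => -(A * θ / 2) * (deriv a (g s) / a (g s)) := by
    filter_upwards [hrange]
    rintro _ ⟨r, rfl⟩
    rw [(hasDerivAt_rpow_comp_of_hasDerivAt_inverse ha hapos hgσ hg' r).deriv, hgσ r]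
  have hH : DifferentiableAt ℝ (fun t => deriv a t / a t) t := (ha' t).div (ha t) (hapos t).ne'
  exact ((hH.hasDerivAt_comp_of_leftInverse hgσ (hg' t)).const_mul _).congr_of_eventuallyEq heq

end TimeChange

theorem schrodinger_eq_of_hubble_eq {ι : Type*} (s : Finset ι) {x A θ ε H' φ' G : ℝ}
    {Ai Gi : ι → ℝ}
    (hx : 0 < x) (hA : A ≠ 0) (h : H' + ε * φ' ^ 2 = G / x ^ A + ∑ i ∈ s, Gi i / x ^ Ai i) :
    -(A * θ / 2) * (H' * (θ * x ^ (A / 2))) +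
        (θ ^ 2 * A / 2 * G - ε * A / 2 * (φ' * (θ * x ^ (A / 2))) ^ 2) * x ^ (-A / 2) =
      ∑ i ∈ s, -(θ ^ 2 * A / 2) * Gi i / (x ^ (-A / 2)) ^ (1 - 2 * Ai i / A) := by
  set p := x ^ (A / 2) with hp
  have hp0 : 0 < p := Real.rpow_pos_of_pos hx _
  have hxA : x ^ A = p ^ 2 := by
    rw [hp, ← Real.rpow_natCast, ← Real.rpow_mul hx.le]; norm_num
  have hxneg : x ^ (-A / 2) = p⁻¹ := by rw [neg_div, Real.rpow_neg hx.le]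
  have hpow : ∀ i, (x ^ (-A / 2)) ^ (1 - 2 * Ai i / A) = x ^ Ai i / p := fun i => by
    rw [← Real.rpow_mul hx.le, hp, ← Real.rpow_sub hx]
    congr 1
    field_simp
    ring
  have hsum : ∑ i ∈ s, -(θ ^ 2 * A / 2) * Gi i / (x ^ Ai i / p)
      = -(θ ^ 2 * A / 2) * p * ∑ i ∈ s, Gi i / x ^ Ai i := by
    rw [Finset.mul_sum]
    refine Finset.sum_congr rfl fun i _ => ?_
    have := (Real.rpow_pos_of_pos hx (Ai i)).ne'
    field_simp
  have hG : G = (H' + ε * φ' ^ 2 - ∑ i ∈ s, Gi i / x ^ Ai i) * p ^ 2 := by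
    rw [h, hxA]; field_simp; ring
  simp only [hpow]
  rw [hsum, hxneg, hG]
  field_simp
  ring

/-- corollary (A ≠ 0, δ = 0), forward direction. -/
theorem stmt_6
    (N : ℕ) (ε A : ℝ) (Ai : Fin N → ℝ) (hA : A ≠ 0)
    (a φ G : ℝ → ℝ) (Gi : Fin N → ℝ → ℝ)
    (ha : Differentiable ℝ a) (ha' : Differentiable ℝ (deriv a))
    (hapos : ∀ t, 0 < a t)
    (hφ : Differentiable ℝ φ)
    (hSF : ∀ t, deriv (fun t => deriv a t / a t) t + ε * (deriv φ t) ^ 2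
        = G t / a t ^ A + ∑ i, Gi i t / a t ^ Ai i)
    (θ : ℝ) (hθ : 0 < θ)
    (σ g : ℝ → ℝ)
    (hσ : ∀ t, deriv σ t = (1 / θ) * a t ^ (-A / 2))
    (hg : Differentiable ℝ g) (hgσ : ∀ t, g (σ t) = t)
    (u ψ P E : ℝ → ℝ) (F : Fin N → ℝ → ℝ) (C : Fin N → ℝ)
    (hu : ∀ s, u s = a (g s) ^ (-A / 2))
    (hψ : ∀ s, ψ s = φ (g s))
    (hP : ∀ s, P s = (ε * A / 2) * (deriv ψ s) ^ 2)
    (hE : ∀ s, E s = (θ ^ 2 * A / 2) * G (g s))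
    (hF : ∀ i s, F i s = -(θ ^ 2 * A / 2) * Gi i (g s))
    (hC : ∀ i, C i = 1 - 2 * Ai i / A) :
    ∀ t, DifferentiableAt ℝ u (σ t) ∧ DifferentiableAt ℝ (deriv u) (σ t) ∧
      deriv (deriv u) (σ t) + (E (σ t) - P (σ t)) * u (σ t)
        = ∑ i, F i (σ t) / u (σ t) ^ C i := by
  obtain rfl : u = _ := funext hu
  obtain rfl : ψ = _ := funext hψ
  have hσpos : ∀ r, 0 < deriv σ r := fun r => by
    rw [hσ r]; exact mul_pos (by positivity) (Real.rpow_pos_of_pos (hapos r) _)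
  have hσd : Differentiable ℝ σ := fun r => differentiableAt_of_deriv_ne_zero (hσpos r).ne'
  have hg' : ∀ r, HasDerivAt g (θ * a r ^ (A / 2)) (σ r) := fun r => by
    have h := LeftInverse.hasDerivAt hgσ (hg _) (hσd r).hasDerivAt
    rwa [hσ, mul_inv, one_div, inv_inv, ← Real.rpow_neg (hapos r).le, neg_div, neg_neg] at h
  intro t
  have hrange : range σ ∈ 𝓝 (σ t) :=
    (strictMono_of_deriv_pos hσpos).range_mem_nhds hσd.continuous t
  have hu'' := hasDerivAt_deriv_rpow_comp_of_hasDerivAt_inverse ha ha' hapos hgσ hg' hrange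
  have hψ' : deriv (fun s => φ (g s)) (σ t) = deriv φ t * (θ * a t ^ (A / 2)) :=
    ((hφ t).hasDerivAt_comp_of_leftInverse hgσ (hg' t)).deriv
  refine ⟨(hasDerivAt_rpow_comp_of_hasDerivAt_inverse ha hapos hgσ hg' t).differentiableAt,
    hu''.differentiableAt, ?_⟩
  rw [hu''.deriv, hP, hψ', hE]
  simp only [hF, hC, hgσ]
  exact schrodinger_eq_of_hubble_eq _ (hapos t) hA (hSF t)
end

section
/- Let N ∈ ℕ, C_1, …, C_N ∈ ℝ, θ > 0, and ε, A ∈ ℝ \ {0}. Let u : ℝ → ℝ be twice differentiable with u(s) > 0 for all s, and let E, P, F_1, …, F_N : ℝ → ℝ satisfy u''(s) + [E(s) − P(s)]u(s) = Σ_{i=1}^N F_i(s)/u(s)^{C_i} for all s ∈ ℝ. Let σ : ℝ → ℝ satisfy σ'(t) = (1/θ) u(σ(t)) for all t, and let ψ be differentiable with ψ'(s)² = (2/(εA)) P(s) for all s. Define a(t) = u(σ(t))^{−2/A}, φ(t) = ψ(σ(t)), G(t) = (2/(Aθ²)) E(σ(t)), G_i(t) = −(2/(Aθ²)) F_i(σ(t)),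 and A_i = (A/2)(1 − C_i). Then a is positive and twice differentiable, and H'(t) + εφ'(t)² = G(t)/a(t)^A + Σ_{i=1}^N G_i(t)/a(t)^{A_i} holds for all t ∈ ℝ, where H = a'/a. -/
/-!
Along the time change `σ' = u ∘ σ / θ`, the function `v = u ∘ σ` satisfies `v' = (u' ∘ σ) v / θ`,
so `a = v ^ (-2/A)` has logarithmic derivative `H = -(2 / (A θ)) u' ∘ σ` and
`H' = -(2 / (A θ²)) (u'' ∘ σ) v`. Substituting the Schrödinger equation for `u''`, the potential
term `P v²` cancels against `ε φ'² = ε (ψ' ∘ σ)² v² / θ²`, and the remaining terms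
`E v²` and `F_i v^(1 - C_i)` are exactly `E / a^A` and `F_i / a^(A_i)`.
-/

open Real

theorem hasDerivAt_of_deriv_eq_pos {σ g : ℝ → ℝ} (hg : ∀ t, 0 < g t)
    (hσ : ∀ t, deriv σ t = g t) (t : ℝ) : HasDerivAt σ (g t) t :=
  hσ t ▸ (differentiableAt_of_deriv_ne_zero (hσ t ▸ (hg t).ne')).hasDerivAt

theorem hasDerivAt_rpow_comp_of_hasDerivAt {u σ : ℝ → ℝ} {θ t : ℝ}
    (hσ : HasDerivAt σ (1 / θ * u (σ t)) t) (hu : DifferentiableAt ℝ u (σ t))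
    (hpos : 0 < u (σ t)) (p : ℝ) :
    HasDerivAt (fun t => u (σ t) ^ p) (p / θ * deriv u (σ t) * u (σ t) ^ p) t := by
  refine ((hu.hasDerivAt.comp t hσ).rpow_const (p := p) (Or.inl hpos.ne')).congr_deriv ?_
  rw [Function.comp_apply, rpow_sub_one hpos.ne']
  field_simp

theorem rpow_neg_two_div_rpow {w : ℝ} (hw : 0 < w) {A : ℝ} (hA : A ≠ 0) (c : ℝ) :
    (w ^ (-2 / A)) ^ (A / 2 * c) = (w ^ c)⁻¹ := by
  rw [← rpow_mul hw.le, ← rpow_neg hw.le]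
  congr 1
  field_simp

theorem liouville_identity_of_schrodinger {N : ℕ} {C : Fin N → ℝ} {θ ε A : ℝ}
    (hθ : θ ≠ 0) (hε : ε ≠ 0) (hA : A ≠ 0) {w u₂ E P ψ₁ : ℝ} {F : Fin N → ℝ}
    (hw : 0 < w) (hNLS : u₂ + (E - P) * w = ∑ i, F i / w ^ C i)
    (hψ : ψ₁ ^ 2 = 2 / (ε * A) * P) :
    -2 / A / θ * (u₂ * (1 / θ * w)) + ε * (ψ₁ * (1 / θ * w)) ^ 2
      = 2 / (A * θ ^ 2) * E / (w ^ (-2 / A)) ^ A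
        + ∑ i, -(2 / (A * θ ^ 2)) * F i / (w ^ (-2 / A)) ^ (A / 2 * (1 - C i)) := by
  have hpow_A : (w ^ (-2 / A)) ^ A = (w ^ 2)⁻¹ := by
    simpa only [div_mul_cancel₀ A two_ne_zero, rpow_two] using rpow_neg_two_div_rpow hw hA 2
  have hsum : ∑ i, -(2 / (A * θ ^ 2)) * F i / (w ^ (-2 / A)) ^ (A / 2 * (1 - C i))
      = -(2 / (A * θ ^ 2)) * w * ∑ i, F i / w ^ C i := by
    rw [Finset.mul_sum]
    refine Finset.sum_congr rfl fun i _ => ?_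
    rw [rpow_neg_two_div_rpow hw hA, rpow_sub hw, rpow_one]
    have : w ^ C i ≠ 0 := (rpow_pos_of_pos hw _).ne'
    field_simp
  rw [hpow_A, hsum, ← hNLS, mul_pow, hψ]
  field_simp
  ring

/-- corollary (A ≠ 0, δ = 0), converse direction. -/
theorem stmt_7
    (N : ℕ) (C : Fin N → ℝ) (θ ε A : ℝ)
    (hθ : 0 < θ) (hε : ε ≠ 0) (hA : A ≠ 0)
    (u E P : ℝ → ℝ) (F : Fin N → ℝ → ℝ)
    (hud : Differentiable ℝ u) (hud' : Differentiable ℝ (deriv u))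
    (hupos : ∀ s, 0 < u s)
    (hNLS : ∀ s, deriv (deriv u) s + (E s - P s) * u s = ∑ i, F i s / u s ^ C i)
    (σ ψ : ℝ → ℝ)
    (hσ : ∀ t, deriv σ t = (1 / θ) * u (σ t))
    (hψd : Differentiable ℝ ψ)
    (hψ : ∀ s, (deriv ψ s) ^ 2 = (2 / (ε * A)) * P s)
    (a φ G : ℝ → ℝ) (Gi : Fin N → ℝ → ℝ) (Ai : Fin N → ℝ)
    (ha : ∀ t, a t = u (σ t) ^ (-2 / A))
    (hφ : ∀ t, φ t = ψ (σ t))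
    (hG : ∀ t, G t = (2 / (A * θ ^ 2)) * E (σ t))
    (hGi : ∀ i t, Gi i t = -(2 / (A * θ ^ 2)) * F i (σ t))
    (hAi : ∀ i, Ai i = (A / 2) * (1 - C i)) :
    (∀ t, 0 < a t) ∧ Differentiable ℝ a ∧ Differentiable ℝ (deriv a) ∧
      ∀ t, deriv (fun t => deriv a t / a t) t + ε * (deriv φ t) ^ 2
        = G t / a t ^ A + ∑ i, Gi i t / a t ^ Ai i := by
  have hσ' : ∀ t, HasDerivAt σ (1 / θ * u (σ t)) t :=
    hasDerivAt_of_deriv_eq_pos (fun t => mul_pos (by positivity) (hupos _)) hσ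
  have hda : ∀ t, HasDerivAt a (-2 / A / θ * deriv u (σ t) * a t) t := fun t => by
    simpa only [← funext ha, ← ha t] using
      hasDerivAt_rpow_comp_of_hasDerivAt (hσ' t) (hud _) (hupos _) (-2 / A)
  have hH : (fun t => deriv a t / a t) = fun t => -2 / A / θ * deriv u (σ t) := by
    ext t
    rw [(hda t).deriv, mul_div_cancel_right₀ _ (ha t ▸ rpow_pos_of_pos (hupos _) _).ne']
  have hadiff : Differentiable ℝ a := fun t => (hda t).differentiableAt
  have hσdiff : Differentiable ℝ σ := fun t => (hσ' t).differentiableAt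
  refine ⟨fun t => ha t ▸ rpow_pos_of_pos (hupos _) _, hadiff, ?_, fun t => ?_⟩
  · rw [funext fun t => (hda t).deriv]
    exact ((hud'.comp hσdiff).const_mul _).mul hadiff
  · have hdH : HasDerivAt (fun t => -2 / A / θ * deriv u (σ t))
        (-2 / A / θ * (deriv (deriv u) (σ t) * (1 / θ * u (σ t)))) t :=
      ((hud' (σ t)).hasDerivAt.comp t (hσ' t)).const_mul _
    have hdφ : HasDerivAt φ (deriv ψ (σ t) * (1 / θ * u (σ t))) t :=
      funext hφ ▸ (hψd (σ t)).hasDerivAt.comp t (hσ' t)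
    rw [hH, hdH.deriv, hdφ.deriv, hG, ha t]
    simp only [hGi, hAi]
    exact liouville_identity_of_schrodinger hθ.ne' hε hA (hupos _) (hNLS _) (hψ _)
end

section
/- Let N ∈ ℕ, ε, A_1, …, A_N ∈ ℝ, δ ∈ ℝ \ {0}, and t₀ ∈ ℝ. Let a : ℝ → ℝ be twice differentiable with a(t) > 0 for all t, let φ be differentiable, and let G, G_1, …, G_N : ℝ → ℝ satisfy H'(t) + δH(t)² + εφ'(t)² = G(t) + Σ_{i=1}^N G_i(t)/a(t)^{A_i} for all t, where H = a'/a. Define u(s) = a(s+t₀)^δ, ψ(s) = φ(s+t₀), P(s) = −εδψ'(s)², E(s) = −δG(s+t₀), F_i(s) = δG_i(s+t₀), and C_i = A_i/δ − 1. Then u is positive and twice differentiable, and u''(s) + [E(s) − P(s)]u(s) = Σ_{i=1}^N F_i(s)/u(s)^{C_i} holds for all s ∈ ℝ. -/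
/-!
With `H = a'/a`, one has `(a^δ)'' = δ a^δ (H' + δ H²)`. Multiplying the hypothesis by `δ a^δ`
therefore gives `u'' = δ u (G - ε φ'²) + Σ δ G_i a^δ / a^{A_i}`, and `a^{A_i} / a^δ = u^{C_i}`
by the choice `C_i = A_i/δ - 1`. The shift by `t₀` commutes with all derivatives involved.
-/

open Real

theorem hasDerivAt_deriv_comp_add_const {f : ℝ → ℝ} {f'' : ℝ} (x c : ℝ)
    (h : HasDerivAt (deriv f) f'' (x + c)) :
    HasDerivAt (deriv fun y => f (y + c)) f'' x := by
  have hderiv : (deriv fun y => f (y + c)) = fun y => deriv f (y + c) :=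
    funext fun y => deriv_comp_add_const f c y
  rw [hderiv]
  exact h.comp_add_const x c

theorem Real.rpow_rpow_div_sub_one {x δ : ℝ} (hx : 0 < x) (hδ : δ ≠ 0) (A : ℝ) :
    (x ^ δ) ^ (A / δ - 1) = x ^ A / x ^ δ := by
  rw [← rpow_mul hx.le, mul_sub, mul_div_cancel₀ A hδ, mul_one, rpow_sub hx]

section PowOfPositive

variable {b : ℝ → ℝ} (p : ℝ)

theorem deriv_rpow_const_of_pos (hb : Differentiable ℝ b) (hpos : ∀ t, 0 < b t) :
    (deriv fun t => b t ^ p) = fun t => p * b t ^ p * logDeriv b t := by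
  funext t
  rw [deriv_rpow_const (hb t) (Or.inl (hpos t).ne'), logDeriv_apply,
    rpow_sub_one (hpos t).ne']
  ring

theorem hasDerivAt_deriv_rpow_const_of_pos (hb : Differentiable ℝ b)
    (hb' : Differentiable ℝ (deriv b)) (hpos : ∀ t, 0 < b t) (t : ℝ) :
    HasDerivAt (deriv fun t => b t ^ p)
      (p * b t ^ p * (deriv (logDeriv b) t + p * logDeriv b t ^ 2)) t := by
  have hpow : HasDerivAt (fun t => b t ^ p) (p * b t ^ p * logDeriv b t) t := by
    have h := ((hb.rpow_const (p := p) fun t => Or.inl (hpos t).ne') t).hasDerivAt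
    rwa [deriv_rpow_const_of_pos p hb hpos] at h
  have hlog : HasDerivAt (logDeriv b) (deriv (logDeriv b) t) t :=
    ((hb' t).div (hb t) (hpos t).ne').hasDerivAt
  rw [deriv_rpow_const_of_pos p hb hpos]
  exact ((hpow.const_mul p).mul hlog).congr_deriv (by ring)

end PowOfPositive

theorem stmt_8_general
    (N : ℕ) (ε δ t₀ : ℝ) (Ai : Fin N → ℝ) (hδ : δ ≠ 0)
    (a φ G : ℝ → ℝ) (Gi : Fin N → ℝ → ℝ)
    (ha : Differentiable ℝ a) (ha' : Differentiable ℝ (deriv a))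
    (hapos : ∀ t, 0 < a t)
    (hSF : ∀ t, deriv (fun t => deriv a t / a t) t + δ * (deriv a t / a t) ^ 2
        + ε * (deriv φ t) ^ 2 = G t + ∑ i, Gi i t / a t ^ Ai i)
    (u ψ P E : ℝ → ℝ) (F : Fin N → ℝ → ℝ) (C : Fin N → ℝ)
    (hu : ∀ s, u s = a (s + t₀) ^ δ)
    (hψ : ∀ s, ψ s = φ (s + t₀))
    (hP : ∀ s, P s = -(ε * δ) * (deriv ψ s) ^ 2)
    (hE : ∀ s, E s = -δ * G (s + t₀))
    (hF : ∀ i s, F i s = δ * Gi i (s + t₀))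
    (hC : ∀ i, C i = Ai i / δ - 1) :
    (∀ s, 0 < u s) ∧ Differentiable ℝ u ∧ Differentiable ℝ (deriv u) ∧
      ∀ s, deriv (deriv u) s + (E s - P s) * u s = ∑ i, F i s / u s ^ C i := by
  obtain rfl : u = fun s => a (s + t₀) ^ δ := funext hu
  obtain rfl : ψ = fun s => φ (s + t₀) := funext hψ
  have hu'' (s : ℝ) := hasDerivAt_deriv_comp_add_const s t₀
    (hasDerivAt_deriv_rpow_const_of_pos δ ha ha' hapos (s + t₀))
  refine ⟨fun s => rpow_pos_of_pos (hapos _) δ,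
    (ha.rpow_const fun t => Or.inl (hapos t).ne').comp (differentiable_id.add_const t₀),
    fun s => (hu'' s).differentiableAt, fun s => ?_⟩
  have hSF' : deriv (logDeriv a) (s + t₀) + δ * logDeriv a (s + t₀) ^ 2
      + ε * deriv φ (s + t₀) ^ 2 = G (s + t₀) + ∑ i, Gi i (s + t₀) / a (s + t₀) ^ Ai i :=
    hSF (s + t₀)
  have hx := hapos (s + t₀)
  simp only [(hu'' s).deriv, hE, hP, hF, hC, deriv_comp_add_const, rpow_rpow_div_sub_one hx hδ,
    div_div_eq_mul_div, mul_right_comm _ _ (a (s + t₀) ^ δ), mul_div_assoc, ← Finset.mul_sum]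
  linear_combination (δ * a (s + t₀) ^ δ) * hSF'

/-- corollary (A = 0, δ ≠ 0), forward direction. -/
theorem stmt_8
    (N : ℕ) (ε δ t₀ : ℝ) (Ai : Fin N → ℝ) (hδ : δ ≠ 0)
    (a φ G : ℝ → ℝ) (Gi : Fin N → ℝ → ℝ)
    (ha : Differentiable ℝ a) (ha' : Differentiable ℝ (deriv a))
    (hapos : ∀ t, 0 < a t)
    (hφ : Differentiable ℝ φ)
    (hSF : ∀ t, deriv (fun t => deriv a t / a t) t + δ * (deriv a t / a t) ^ 2
        + ε * (deriv φ t) ^ 2 = G t + ∑ i, Gi i t / a t ^ Ai i)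
    (u ψ P E : ℝ → ℝ) (F : Fin N → ℝ → ℝ) (C : Fin N → ℝ)
    (hu : ∀ s, u s = a (s + t₀) ^ δ)
    (hψ : ∀ s, ψ s = φ (s + t₀))
    (hP : ∀ s, P s = -(ε * δ) * (deriv ψ s) ^ 2)
    (hE : ∀ s, E s = -δ * G (s + t₀))
    (hF : ∀ i s, F i s = δ * Gi i (s + t₀))
    (hC : ∀ i, C i = Ai i / δ - 1) :
    (∀ s, 0 < u s) ∧ Differentiable ℝ u ∧ Differentiable ℝ (deriv u) ∧
      ∀ s, deriv (deriv u) s + (E s - P s) * u s = ∑ i, F i s / u s ^ C i :=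
  stmt_8_general N ε δ t₀ Ai hδ a φ G Gi ha ha' hapos hSF u ψ P E F C hu hψ hP hE hF hC
end

section
/- Let N ∈ ℕ, C_1, …, C_N ∈ ℝ, t₀ ∈ ℝ, and ε, δ ∈ ℝ \ {0}. Let u : ℝ → ℝ be twice differentiable with u(s) > 0 for all s, and let E, P, F_1, …, F_N : ℝ → ℝ satisfy u''(s) + [E(s) − P(s)]u(s) = Σ_{i=1}^N F_i(s)/u(s)^{C_i} for all s ∈ ℝ. Let ψ be differentiable with ψ'(s)² = −(1/(εδ)) P(s) for all s. Define a(t) = u(t−t₀)^{1/δ}, φ(t) = ψ(t−t₀), G(t) = −(1/δ)E(t−t₀), G_i(t) = (1/δ)F_i(t−t₀), and A_i = δ(1 + C_i). Then a is positive and twice differentiable, and H'(t) + δH(t)² + εφ'(t)² = G(t) + Σ_{i=1}^N G_i(t)/a(t)^{A_i} holds for all t ∈ ℝ, where H = a'/a. -/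
/-!
With `v(t) = u(t - t₀)` we have `a = v ^ (1/δ)`, so `H = (1/δ) v'/v` and the Riccati identity
`(v'/v)' + (v'/v)² = v''/v` gives `H' + δ H² = v''/(δ v)`. Substituting `v''` from the
Schrödinger-type equation, the `P`-term cancels against `ε φ'²`, and
`(v ^ (1/δ)) ^ (δ (1 + C_i)) = v · v ^ C_i` turns `F_i / (v · v ^ C_i)` into `G_i / a ^ A_i`.
-/

open Real

lemma hasDerivAt_logDeriv {𝕜 : Type*} [NontriviallyNormedField 𝕜] {f : 𝕜 → 𝕜} {x : 𝕜}
    (hf : DifferentiableAt 𝕜 f x) (hf' : DifferentiableAt 𝕜 (deriv f) x) (hx : f x ≠ 0) :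
    HasDerivAt (logDeriv f) (deriv (deriv f) x / f x - logDeriv f x ^ 2) x := by
  refine (hf'.hasDerivAt.div hf.hasDerivAt hx).congr_deriv ?_
  rw [logDeriv_apply]
  field_simp

lemma logDeriv_rpow_const {f : ℝ → ℝ} {x : ℝ} (r : ℝ) (hf : DifferentiableAt ℝ f x)
    (hx : 0 < f x) : logDeriv (fun y => f y ^ r) x = r * logDeriv f x := by
  rw [logDeriv_apply, logDeriv_apply, deriv_rpow_const hf (Or.inl hx.ne'), rpow_sub_one hx.ne']
  have : f x ^ r ≠ 0 := (rpow_pos_of_pos hx r).ne'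
  field_simp

lemma differentiable_deriv_rpow_const {v : ℝ → ℝ} (hv : Differentiable ℝ v)
    (hv' : Differentiable ℝ (deriv v)) (hpos : ∀ s, 0 < v s) (r : ℝ) :
    Differentiable ℝ (deriv fun s => v s ^ r) := by
  have hderiv : deriv (fun s => v s ^ r) = fun s => deriv v s * r * v s ^ (r - 1) :=
    funext fun s => deriv_rpow_const (hv s) (Or.inl (hpos s).ne')
  rw [hderiv]
  exact (hv'.mul_const r).mul (hv.rpow_const fun s => Or.inl (hpos s).ne')

lemma deriv_logDeriv_rpow_add_mul_sq {v : ℝ → ℝ} (hv : Differentiable ℝ v)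
    (hv' : Differentiable ℝ (deriv v)) (hpos : ∀ s, 0 < v s) {δ : ℝ} (hδ : δ ≠ 0) (t : ℝ) :
    deriv (logDeriv fun s => v s ^ (1 / δ)) t + δ * logDeriv (fun s => v s ^ (1 / δ)) t ^ 2
      = deriv (deriv v) t / (δ * v t) := by
  have hL : logDeriv (fun s => v s ^ (1 / δ)) = fun s => 1 / δ * logDeriv v s :=
    funext fun s => logDeriv_rpow_const _ (hv s) (hpos s)
  rw [hL, ((hasDerivAt_logDeriv (hv t) (hv' t) (hpos t).ne').const_mul (1 / δ)).deriv]
  have := (hpos t).ne'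
  field_simp
  ring

theorem riccati_of_schrodinger {v : ℝ → ℝ} (hv : Differentiable ℝ v)
    (hv' : Differentiable ℝ (deriv v)) (hpos : ∀ s, 0 < v s) {ι : Type*} [Fintype ι] (C : ι → ℝ)
    {ε δ : ℝ} (hε : ε ≠ 0) (hδ : δ ≠ 0) {E P φ : ℝ → ℝ} {F : ι → ℝ → ℝ}
    (hNLS : ∀ s, deriv (deriv v) s + (E s - P s) * v s = ∑ i, F i s / v s ^ C i)
    (hφ : ∀ s, deriv φ s ^ 2 = -(1 / (ε * δ)) * P s) (t : ℝ) :
    deriv (logDeriv fun s => v s ^ (1 / δ)) t + δ * logDeriv (fun s => v s ^ (1 / δ)) t ^ 2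
        + ε * deriv φ t ^ 2
      = -(1 / δ) * E t + ∑ i, 1 / δ * F i t / (v t ^ (1 / δ)) ^ (δ * (1 + C i)) := by
  have hvt := hpos t
  have hpow : ∀ i, (v t ^ (1 / δ)) ^ (δ * (1 + C i)) = v t * v t ^ C i := fun i => by
    rw [← rpow_mul hvt.le, ← mul_assoc, one_div_mul_cancel hδ, one_mul, rpow_add hvt, rpow_one]
  have hsum : ∑ i, 1 / δ * F i t / (v t * v t ^ C i) = 1 / (δ * v t) * ∑ i, F i t / v t ^ C i := by
    rw [Finset.mul_sum]
    refine Finset.sum_congr rfl fun i _ => ?_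
    have := (rpow_pos_of_pos hvt (C i)).ne'
    field_simp
  simp only [hpow, hsum, deriv_logDeriv_rpow_add_mul_sq hv hv' hpos hδ, hφ, ← hNLS]
  field_simp
  ring

theorem stmt_9_general
    (N : ℕ) (C : Fin N → ℝ) (t₀ ε δ : ℝ) (hε : ε ≠ 0) (hδ : δ ≠ 0)
    (u E P : ℝ → ℝ) (F : Fin N → ℝ → ℝ)
    (hud : Differentiable ℝ u) (hud' : Differentiable ℝ (deriv u))
    (hupos : ∀ s, 0 < u s)
    (hNLS : ∀ s, deriv (deriv u) s + (E s - P s) * u s = ∑ i, F i s / u s ^ C i)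
    (ψ : ℝ → ℝ)
    (hψ : ∀ s, (deriv ψ s) ^ 2 = -(1 / (ε * δ)) * P s)
    (a φ G : ℝ → ℝ) (Gi : Fin N → ℝ → ℝ) (Ai : Fin N → ℝ)
    (ha : ∀ t, a t = u (t - t₀) ^ (1 / δ))
    (hφ : ∀ t, φ t = ψ (t - t₀))
    (hG : ∀ t, G t = -(1 / δ) * E (t - t₀))
    (hGi : ∀ i t, Gi i t = (1 / δ) * F i (t - t₀))
    (hAi : ∀ i, Ai i = δ * (1 + C i)) :
    (∀ t, 0 < a t) ∧ Differentiable ℝ a ∧ Differentiable ℝ (deriv a) ∧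
      ∀ t, deriv (fun t => deriv a t / a t) t + δ * (deriv a t / a t) ^ 2
        + ε * (deriv φ t) ^ 2 = G t + ∑ i, Gi i t / a t ^ Ai i := by
  set v : ℝ → ℝ := fun s => u (s - t₀)
  have hdv : deriv v = fun s => deriv u (s - t₀) := funext fun s => deriv_comp_sub_const ..
  have hv : Differentiable ℝ v := hud.comp (differentiable_id.sub_const t₀)
  have hv' : Differentiable ℝ (deriv v) := hdv ▸ hud'.comp (differentiable_id.sub_const t₀)
  have hvpos : ∀ s, 0 < v s := fun s => hupos (s - t₀)
  have hvNLS : ∀ s, deriv (deriv v) s + (E (s - t₀) - P (s - t₀)) * v s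
      = ∑ i, F i (s - t₀) / v s ^ C i := fun s => by
    rw [hdv, deriv_comp_sub_const]
    exact hNLS (s - t₀)
  have hφ' : ∀ s, deriv φ s ^ 2 = -(1 / (ε * δ)) * P (s - t₀) := fun s => by
    rw [funext hφ, deriv_comp_sub_const]
    exact hψ (s - t₀)
  obtain rfl : a = fun t => v t ^ (1 / δ) := funext ha
  refine ⟨fun t => rpow_pos_of_pos (hvpos t) _, hv.rpow_const fun s => Or.inl (hvpos s).ne',
    differentiable_deriv_rpow_const hv hv' hvpos _, fun t => ?_⟩
  simp only [hG, hGi, hAi]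
  exact riccati_of_schrodinger hv hv' hvpos C hε hδ hvNLS hφ' t

/-- corollary (A = 0, δ ≠ 0), converse direction. -/
theorem stmt_9
    (N : ℕ) (C : Fin N → ℝ) (t₀ ε δ : ℝ) (hε : ε ≠ 0) (hδ : δ ≠ 0)
    (u E P : ℝ → ℝ) (F : Fin N → ℝ → ℝ)
    (hud : Differentiable ℝ u) (hud' : Differentiable ℝ (deriv u))
    (hupos : ∀ s, 0 < u s)
    (hNLS : ∀ s, deriv (deriv u) s + (E s - P s) * u s = ∑ i, F i s / u s ^ C i)
    (ψ : ℝ → ℝ) (hψd : Differentiable ℝ ψ)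
    (hψ : ∀ s, (deriv ψ s) ^ 2 = -(1 / (ε * δ)) * P s)
    (a φ G : ℝ → ℝ) (Gi : Fin N → ℝ → ℝ) (Ai : Fin N → ℝ)
    (ha : ∀ t, a t = u (t - t₀) ^ (1 / δ))
    (hφ : ∀ t, φ t = ψ (t - t₀))
    (hG : ∀ t, G t = -(1 / δ) * E (t - t₀))
    (hGi : ∀ i t, Gi i t = (1 / δ) * F i (t - t₀))
    (hAi : ∀ i, Ai i = δ * (1 + C i)) :
    (∀ t, 0 < a t) ∧ Differentiable ℝ a ∧ Differentiable ℝ (deriv a) ∧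
      ∀ t, deriv (fun t => deriv a t / a t) t + δ * (deriv a t / a t) ^ 2
        + ε * (deriv φ t) ^ 2 = G t + ∑ i, Gi i t / a t ^ Ai i :=
  stmt_9_general N C t₀ ε δ hε hδ u E P F hud hud' hupos hNLS ψ hψ a φ G Gi Ai ha hφ hG hGi hAi
end

section
/- Let d ∈ ℝ \ {0, 1}, κ ∈ ℝ \ {0}, M ∈ ℕ, and k, Λ, n_1, …, n_M ∈ ℝ. Let a : ℝ → ℝ be twice differentiable with a(t) > 0 for all t, let φ be differentiable, and let D_1, …, D_M, ρ', p' : ℝ → ℝ and V : ℝ → ℝ be such that the FRLW Einstein equations (i) and (ii) hold for all t ∈ ℝ. Let θ > 0 and q ∈ ℝ \ {0}, let τ satisfy τ'(t) = θ a(t)^q for all t with differentiable inverse f (f(τ(t)) = t). Define Y(s) = a(f(s))^q, φ̃ = φ∘f, Q(s) = (qκ/(d−1)) φ̃'(s)², D̃_i = D_i∘f, ρ̃ = ρ'∘f, and p̃ = p'∘f. Then for every t ∈ ℝ, at s = τ(t) the function Y is twice differentiable and satisfies Y''(s) + Q(s)Y(s) = qk/(θ² Y(s)^{(2+q)/q})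 − Σ_{i=1}^M q n_i κ D̃_i(s)/(θ² d(d−1) Y(s)^{(n_i+q)/q}) − qκ(ρ̃(s) + p̃(s))/(θ²(d−1) Y(s)). -/
/-- FRLW Einstein equations imply a generalized EMP equation. -/
theorem stmt_10
    (d κ : ℝ) (hd0 : d ≠ 0) (hd1 : d ≠ 1) (hκ : κ ≠ 0)
    (M : ℕ) (k Λ : ℝ) (n : Fin M → ℝ)
    (a φ : ℝ → ℝ) (D : Fin M → ℝ → ℝ) (ρ' p' V : ℝ → ℝ)
    (ha : Differentiable ℝ a) (ha' : Differentiable ℝ (deriv a))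
    (hapos : ∀ t, 0 < a t)
    (hφ : Differentiable ℝ φ)
    (hEq1 : ∀ t, (d / 2) * (deriv a t / a t) ^ 2 + d * k / (2 * (a t) ^ 2)
        = (κ / (d - 1)) * ((deriv φ t) ^ 2 / 2 + V (φ t)
            + (∑ i, D i t / a t ^ n i) + ρ' t) + Λ / (d - 1))
    (hEq2 : ∀ t, deriv (fun t => deriv a t / a t) t
        + (d / 2) * (deriv a t / a t) ^ 2 + (d - 2) * k / (2 * (a t) ^ 2)
        = -(κ / (d - 1)) * ((deriv φ t) ^ 2 / 2 - V (φ t)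
            + (∑ i, (n i - d) * D i t / (d * a t ^ n i)) + p' t) + Λ / (d - 1))
    (θ q : ℝ) (hθ : 0 < θ) (hq : q ≠ 0)
    (τ f : ℝ → ℝ)
    (hτ : ∀ t, deriv τ t = θ * a t ^ q)
    (hf : Differentiable ℝ f) (hfτ : ∀ t, f (τ t) = t)
    (Y φt Q : ℝ → ℝ)
    (hY : ∀ s, Y s = a (f s) ^ q)
    (hφt : ∀ s, φt s = φ (f s))
    (hQ : ∀ s, Q s = (q * κ / (d - 1)) * (deriv φt s) ^ 2) :
    ∀ t, DifferentiableAt ℝ Y (τ t) ∧ DifferentiableAt ℝ (deriv Y) (τ t) ∧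
      deriv (deriv Y) (τ t) + Q (τ t) * Y (τ t)
        = q * k / (θ ^ 2 * Y (τ t) ^ ((2 + q) / q))
          - (∑ i, q * n i * κ * D i (f (τ t))
              / (θ ^ 2 * d * (d - 1) * Y (τ t) ^ ((n i + q) / q)))
          - q * κ * (ρ' (f (τ t)) + p' (f (τ t))) / (θ ^ 2 * (d - 1) * Y (τ t)) := by
  have hτpos : ∀ u, (0:ℝ) < θ * a u ^ q := fun u => by
    have := hapos u; positivity
  have hτd : ∀ u, HasDerivAt τ (θ * a u ^ q) u := by
    intro u
    have hne : deriv τ u ≠ 0 := by rw [hτ u]; exact (hτpos u).ne'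
    have h := (differentiableAt_of_deriv_ne_zero hne).hasDerivAt
    rwa [hτ u] at h
  have hτmono : StrictMono τ := by
    apply strictMono_of_deriv_pos
    intro u; rw [hτ u]; exact hτpos u
  -- derivative of f at points of the form τ u
  have hfd : ∀ u, HasDerivAt f (1 / (θ * a u ^ q)) (τ u) := by
    intro u
    have hcomp : HasDerivAt (fun x => f (τ x)) (deriv f (τ u) * (θ * a u ^ q)) u :=
      ((hf (τ u)).hasDerivAt).comp u (hτd u)
    have hid : HasDerivAt (fun x => f (τ x)) 1 u := by
      have hfe : (fun x => f (τ x)) = fun x => x := funext hfτ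
      rw [hfe]; exact hasDerivAt_id u
    have h1 : deriv f (τ u) * (θ * a u ^ q) = 1 := hcomp.unique hid
    have h2 : deriv f (τ u) = 1 / (θ * a u ^ q) := by
      rw [eq_div_iff (hτpos u).ne']
      exact h1
    have := (hf (τ u)).hasDerivAt
    rwa [h2] at this
  have hYeq : Y = fun s => a (f s) ^ q := funext hY
  -- Y has a derivative everywhere
  have hYhas : ∀ s, HasDerivAt Y
      (q * a (f s) ^ (q - 1) * deriv (fun s => a (f s)) s) s := by
    intro s
    have h1 : HasDerivAt (fun x : ℝ => x ^ q) (q * a (f s) ^ (q - 1)) (a (f s)) :=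
      Real.hasDerivAt_rpow_const (Or.inl (hapos (f s)).ne')
    have h2 : HasDerivAt (fun s => a (f s)) (deriv (fun s => a (f s)) s) s :=
      (((ha (f s)).comp s (hf s)).hasDerivAt)
    have h3 := h1.comp s h2
    rw [hYeq]
    exact h3
  -- value of deriv Y on the range of τ
  have hderivY : ∀ u, deriv Y (τ u) = (q / θ) * (deriv a u / a u) := by
    intro u
    have ha1 : HasDerivAt a (deriv a u) (f (τ u)) := by
      rw [hfτ u]; exact (ha u).hasDerivAt
    have h2 : HasDerivAt (fun s => a (f s)) (deriv a u * (1 / (θ * a u ^ q))) (τ u) :=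
      ha1.comp (τ u) (hfd u)
    have h1 : HasDerivAt (fun x : ℝ => x ^ q) (q * a u ^ (q - 1)) (a (f (τ u))) := by
      rw [hfτ u]; exact Real.hasDerivAt_rpow_const (Or.inl (hapos u).ne')
    have h3 := h1.comp (τ u) h2
    have h4 : deriv Y (τ u) = q * a u ^ (q - 1) * (deriv a u * (1 / (θ * a u ^ q))) := by
      rw [hYeq]; exact h3.deriv
    rw [h4]
    have hA := hapos u
    have hsub : a u ^ (q - 1) = a u ^ q / a u := by
      rw [Real.rpow_sub hA, Real.rpow_one]
    rw [hsub]
    have hPq : a u ^ q ≠ 0 := (Real.rpow_pos_of_pos hA q).ne'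
    field_simp
  intro t
  have hft : f (τ t) = t := hfτ t
  have hA := hapos t
  have hPq : (a t : ℝ) ^ q ≠ 0 := (Real.rpow_pos_of_pos hA q).ne'
  -- deriv Y agrees with G near τ t
  set G : ℝ → ℝ := fun s => (q / θ) * (deriv a (f s) / a (f s)) with hG
  have hss : Set.Ioo (τ (t-1)) (τ (t+1)) ⊆ Set.range τ := by
    intro s hs
    have hcont : ContinuousOn τ (Set.Icc (t-1) (t+1)) := fun u _ =>
      ((hτd u).differentiableAt.continuousAt).continuousWithinAt
    obtain ⟨u, _, hu⟩ := intermediate_value_Ioo (by linarith : t - 1 ≤ t + 1) hcont hs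
    exact ⟨u, hu⟩
  have hmem : τ t ∈ Set.Ioo (τ (t-1)) (τ (t+1)) :=
    ⟨hτmono (by linarith), hτmono (by linarith)⟩
  have hEv : deriv Y =ᶠ[nhds (τ t)] G := by
    filter_upwards [Ioo_mem_nhds hmem.1 hmem.2] with s hs
    obtain ⟨u, rfl⟩ := hss hs
    rw [hderivY u, hG]
    simp only [hfτ u]
  -- derivative of G at τ t
  have hH : HasDerivAt (fun u => deriv a u / a u)
      (deriv (fun u => deriv a u / a u) t) (f (τ t)) := by
    rw [hft]
    exact ((ha' t).div (ha t) (hapos t).ne').hasDerivAt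
  have hcompG := hH.comp (τ t) (hfd t)
  have hGhas : HasDerivAt G
      ((q / θ) * (deriv (fun u => deriv a u / a u) t * (1 / (θ * a t ^ q)))) (τ t) := by
    have := hcompG.const_mul (q / θ)
    exact this
  have hGdiff : DifferentiableAt ℝ G (τ t) := hGhas.differentiableAt
  have hdY : DifferentiableAt ℝ (deriv Y) (τ t) :=
    hGdiff.congr_of_eventuallyEq hEv
  have hdd : deriv (deriv Y) (τ t)
      = (q / θ) * (deriv (fun u => deriv a u / a u) t * (1 / (θ * a t ^ q))) := by
    rw [hEv.deriv_eq]; exact hGhas.deriv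
  -- derivative of φt at τ t
  have hφ1 : HasDerivAt φ (deriv φ t) (f (τ t)) := by
    rw [hft]; exact (hφ t).hasDerivAt
  have hφtc := hφ1.comp (τ t) (hfd t)
  have hφtd : deriv φt (τ t) = deriv φ t * (1 / (θ * a t ^ q)) := by
    have hφe : φt = fun s => φ (f s) := funext hφt
    rw [hφe]; exact hφtc.deriv
  refine ⟨(hYhas (τ t)).differentiableAt, hdY, ?_⟩
  -- rewrite powers
  have h2q : ((a t ^ q) ^ ((2 + q) / q) : ℝ) = (a t) ^ (2:ℕ) * a t ^ q := by
    rw [← Real.rpow_natCast (a t) 2, ← Real.rpow_add hA, ← Real.rpow_mul hA.le]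
    congr 1
    push_cast
    field_simp
  have hniq : ∀ i : Fin M, ((a t ^ q) ^ ((n i + q) / q) : ℝ) = a t ^ (n i) * a t ^ q := by
    intro i
    rw [← Real.rpow_add hA, ← Real.rpow_mul hA.le]
    congr 1
    field_simp
  rw [hdd, hQ, hφtd, hY, hft, h2q]
  simp only [hft, hniq]
  -- sums
  have hd1' : d - 1 ≠ 0 := sub_ne_zero.mpr hd1
  have hθ' : θ ≠ 0 := hθ.ne'
  have hsumG : ∑ i, q * n i * κ * D i t / (θ ^ 2 * d * (d - 1) * (a t ^ (n i) * a t ^ q))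
      = (q * κ / (θ ^ 2 * d * (d - 1) * a t ^ q)) * ∑ i, n i * D i t / a t ^ (n i) := by
    rw [Finset.mul_sum]
    apply Finset.sum_congr rfl
    intro i _
    have hni : (a t : ℝ) ^ (n i) ≠ 0 := (Real.rpow_pos_of_pos hA _).ne'
    field_simp
  rw [hsumG]
  have hSd : ∑ i, (n i - d) * D i t / (d * a t ^ n i)
      = (∑ i, n i * D i t / a t ^ (n i)) / d - ∑ i, D i t / a t ^ n i := by
    rw [Finset.sum_div, ← Finset.sum_sub_distrib]
    apply Finset.sum_congr rfl
    intro i _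
    have hni : (a t : ℝ) ^ (n i) ≠ 0 := (Real.rpow_pos_of_pos hA _).ne'
    field_simp
  have e1 := hEq1 t
  have e2 := hEq2 t
  rw [hSd] at e2
  have key : deriv (fun u => deriv a u / a u) t
      = k / (a t) ^ 2 - (κ / (d - 1)) * (deriv φ t) ^ 2
        - (κ / (d - 1)) * ((∑ i, n i * D i t / a t ^ (n i)) / d)
        - (κ / (d - 1)) * (ρ' t + p' t) := by
    linear_combination e2 - e1
  rw [key]
  have hAne : a t ≠ 0 := hA.ne'
  field_simp
  ring
end

section
/- Let d ∈ ℝ \ {0, 1}, κ ∈ ℝ \ {0}, M ∈ ℕ, and k, Λ, n_1, …, n_M ∈ ℝ. Let a : ℝ → ℝ be twice differentiable with a(t) > 0 for all t, let φ be differentiable, and let D_1, …, D_M, ρ', p' : ℝ → ℝ and V : ℝ → ℝ be such that the FRLW Einstein equations (i) and (ii) hold for all t ∈ ℝ. Let θ > 0, let σ satisfy σ'(t) = 1/(θ a(t)) for all t with differentiable inverse g (g(σ(t)) = t). Define u(s) = 1/a(g(s)), ψ = φ∘g, P(s) = (κ/(d−1)) ψ'(s)², D̃_i = D_i∘g, ρ̃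 = ρ'∘g, and p̃ = p'∘g. Then for every t ∈ ℝ, at s = σ(t) the function u is twice differentiable and satisfies u''(s) + [θ²k − P(s)]u(s) = Σ_{i=1}^M θ²κ n_i D̃_i(s)/(d(d−1) u(s)^{1−n_i}) + θ²κ(ρ̃(s) + p̃(s))/((d−1) u(s)). -/
set_option maxHeartbeats 400000

open Real Filter Set Topology


/-- FRLW Einstein equations imply a Schrödinger-type equation. -/
theorem stmt_11
    (d κ : ℝ) (hd0 : d ≠ 0) (hd1 : d ≠ 1) (hκ : κ ≠ 0)
    (M : ℕ) (k Λ : ℝ) (n : Fin M → ℝ)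
    (a φ : ℝ → ℝ) (D : Fin M → ℝ → ℝ) (ρ' p' V : ℝ → ℝ)
    (ha : Differentiable ℝ a) (ha' : Differentiable ℝ (deriv a))
    (hapos : ∀ t, 0 < a t)
    (hφ : Differentiable ℝ φ)
    (hEq1 : ∀ t, (d / 2) * (deriv a t / a t) ^ 2 + d * k / (2 * (a t) ^ 2)
        = (κ / (d - 1)) * ((deriv φ t) ^ 2 / 2 + V (φ t)
            + (∑ i, D i t / a t ^ n i) + ρ' t) + Λ / (d - 1))
    (hEq2 : ∀ t, deriv (fun t => deriv a t / a t) t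
        + (d / 2) * (deriv a t / a t) ^ 2 + (d - 2) * k / (2 * (a t) ^ 2)
        = -(κ / (d - 1)) * ((deriv φ t) ^ 2 / 2 - V (φ t)
            + (∑ i, (n i - d) * D i t / (d * a t ^ n i)) + p' t) + Λ / (d - 1))
    (θ : ℝ) (hθ : 0 < θ)
    (σ g : ℝ → ℝ)
    (hσ : ∀ t, deriv σ t = 1 / (θ * a t))
    (hg : Differentiable ℝ g) (hgσ : ∀ t, g (σ t) = t)
    (u ψ P : ℝ → ℝ)
    (hu : ∀ s, u s = 1 / a (g s))
    (hψ : ∀ s, ψ s = φ (g s))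
    (hP : ∀ s, P s = (κ / (d - 1)) * (deriv ψ s) ^ 2) :
    ∀ t, DifferentiableAt ℝ u (σ t) ∧ DifferentiableAt ℝ (deriv u) (σ t) ∧
      deriv (deriv u) (σ t) + (θ ^ 2 * k - P (σ t)) * u (σ t)
        = (∑ i, θ ^ 2 * κ * n i * D i (g (σ t))
            / (d * (d - 1) * u (σ t) ^ (1 - n i)))
          + θ ^ 2 * κ * (ρ' (g (σ t)) + p' (g (σ t))) / ((d - 1) * u (σ t)) := by
  intro t
  have hd1' : d - 1 ≠ 0 := sub_ne_zero.mpr hd1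
  have hθ' : θ ≠ 0 := ne_of_gt hθ
  have hane : ∀ x, a x ≠ 0 := fun x => (hapos x).ne'
  -- σ is differentiable everywhere
  have hσd : ∀ x, DifferentiableAt ℝ σ x := by
    intro x
    by_contra h
    have h0 := deriv_zero_of_not_differentiableAt h
    have h1 : (1 : ℝ) / (θ * a x) ≠ 0 :=
      div_ne_zero one_ne_zero (mul_ne_zero hθ' (hane x))
    exact h1 ((hσ x).symm.trans h0)
  have hmono : StrictMono σ :=
    strictMono_of_deriv_pos (fun x => by
      rw [hσ x]; exact div_pos one_pos (mul_pos hθ (hapos x)))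
  -- derivative of g at points of the range of σ
  have hgder : ∀ x, HasDerivAt g (θ * a x) (σ x) := by
    intro x
    have h1 : HasDerivAt (fun y => g (σ y)) (deriv g (σ x) * deriv σ x) x :=
      ((hg (σ x)).hasDerivAt).comp x (hσd x).hasDerivAt
    have h2 : HasDerivAt (fun y => g (σ y)) 1 x := by
      have : (fun y => g (σ y)) = fun y => y := funext hgσ
      rw [this]; exact hasDerivAt_id x
    have h3 := h1.unique h2
    rw [hσ x] at h3
    have h4 : deriv g (σ x) = θ * a x := by
      field_simp [hθ', hane x] at h3; exact h3
    rw [← h4]; exact (hg (σ x)).hasDerivAt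
  -- derivative of u at points of the range of σ
  have huHas : ∀ x, HasDerivAt u (-(θ * (deriv a x / a x))) (σ x) := by
    intro x
    have hax : HasDerivAt a (deriv a x) (g (σ x)) := by
      rw [hgσ x]; exact (ha x).hasDerivAt
    have hag : HasDerivAt (fun s => a (g s)) (deriv a x * (θ * a x)) (σ x) :=
      hax.comp (σ x) (hgder x)
    have hne : a (g (σ x)) ≠ 0 := by rw [hgσ x]; exact hane x
    have hinv := hag.inv hne
    have hueq : u = fun s => (a (g s))⁻¹ := by
      funext s; rw [hu s, one_div]
    rw [hgσ x] at hinv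
    have hval : -(deriv a x * (θ * a x)) / a x ^ 2 = -(θ * (deriv a x / a x)) := by
      field_simp [hane x]
    rw [hueq]
    rw [← hval]
    exact hinv
  have hudc : ∀ x, deriv u (σ x) = -(θ * (deriv a x / a x)) := fun x => (huHas x).deriv
  -- local formula for deriv u near σ t
  have hmem : Ioo (σ (t - 1)) (σ (t + 1)) ∈ 𝓝 (σ t) :=
    Ioo_mem_nhds (hmono (by linarith)) (hmono (by linarith))
  have hσcont : ContinuousOn σ (Icc (t - 1) (t + 1)) :=
    (Differentiable.continuous fun x => hσd x).continuousOn
  have hsub : Ioo (σ (t - 1)) (σ (t + 1)) ⊆ σ '' Ioo (t - 1) (t + 1) :=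
    intermediate_value_Ioo (by linarith) hσcont
  have hEv : deriv u =ᶠ[𝓝 (σ t)] fun s => -(θ * (deriv a (g s) / a (g s))) := by
    filter_upwards [hmem] with s hs
    obtain ⟨x, -, rfl⟩ := hsub hs
    rw [hudc x, hgσ x]
  -- derivative of the local formula
  have hHd : DifferentiableAt ℝ (fun y => deriv a y / a y) t :=
    (ha' t).div (ha t) (hane t)
  have hHg : HasDerivAt (fun s => deriv a (g s) / a (g s))
      (deriv (fun y => deriv a y / a y) t * (θ * a t)) (σ t) := by
    have h1 : HasDerivAt (fun y => deriv a y / a y)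
        (deriv (fun y => deriv a y / a y) t) (g (σ t)) := by
      rw [hgσ t]; exact hHd.hasDerivAt
    exact h1.comp (σ t) (hgder t)
  have hF : HasDerivAt (fun s => -(θ * (deriv a (g s) / a (g s))))
      (-(θ * (deriv (fun y => deriv a y / a y) t * (θ * a t)))) (σ t) :=
    (hHg.const_mul θ).neg
  have hdd : DifferentiableAt ℝ (deriv u) (σ t) :=
    (Filter.EventuallyEq.differentiableAt_iff hEv).mpr hF.differentiableAt
  have hddval : deriv (deriv u) (σ t)
      = -(θ * (deriv (fun y => deriv a y / a y) t * (θ * a t))) := by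
    rw [hEv.deriv_eq]; exact hF.deriv
  refine ⟨(huHas t).differentiableAt, hdd, ?_⟩
  -- derivative of ψ at σ t
  have hψHas : HasDerivAt ψ (deriv φ t * (θ * a t)) (σ t) := by
    have hφx : HasDerivAt φ (deriv φ t) (g (σ t)) := by
      rw [hgσ t]; exact (hφ t).hasDerivAt
    have hψeq : ψ = fun s => φ (g s) := funext hψ
    rw [hψeq]
    exact hφx.comp (σ t) (hgder t)
  have hψval : deriv ψ (σ t) = deriv φ t * (θ * a t) := hψHas.deriv
  -- rewrite everything in terms of t
  rw [hddval, hP, hψval, hu, hgσ]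
  -- the rpow simplification inside the sum
  have hrp : ∀ i : Fin M, (1 / a t) ^ (1 - n i) = a t ^ n i / a t := by
    intro i
    rw [one_div, Real.inv_rpow (hapos t).le, Real.rpow_sub (hapos t),
      Real.rpow_one, inv_div]
  have hsum : (∑ i, θ ^ 2 * κ * n i * D i t / (d * (d - 1) * (1 / a t) ^ (1 - n i)))
      = θ ^ 2 * (κ / (d - 1)) * a t *
        ((∑ i, (n i - d) * D i t / (d * a t ^ n i)) + (∑ i, D i t / a t ^ n i)) := by
    rw [← Finset.sum_add_distrib, Finset.mul_sum]
    refine Finset.sum_congr rfl fun i _ => ?_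
    rw [hrp i]
    have hpow : (0 : ℝ) < a t ^ n i := Real.rpow_pos_of_pos (hapos t) _
    field_simp
    ring
  rw [hsum]
  -- key combination of the Einstein equations
  have hkey : deriv (fun y => deriv a y / a y) t
      = k / (a t) ^ 2 - (κ / (d - 1)) * ((deriv φ t) ^ 2
          + (∑ i, (n i - d) * D i t / (d * a t ^ n i))
          + (∑ i, D i t / a t ^ n i) + ρ' t + p' t) := by
    linear_combination hEq2 t - hEq1 t
  rw [hkey]
  field_simp [hane t, hd1']
  ring
end

section
/- Let d ∈ ℝ \ {0, 1}, κ ∈ ℝ \ {0}, M ∈ ℕ, k, Λ, n_1, …, n_M ∈ ℝ, and let j ∈ {1, …, M} be an index with n_j ≠ 0. Let a : ℝ → ℝ be twice differentiable with a(t) > 0 for all t, let φ be differentiable, and let D_1, …, D_M, ρ', p' : ℝ → ℝ and V : ℝ → ℝ be such that the FRLW Einstein equations (i) and (ii) hold for all t ∈ ℝ. Let θ > 0, let σ satisfy σ'(t) = (1/θ) a(t)^{−n_j/2} for all t with differentiable inverse g (g(σ(t)) = t). Define u(s) = a(g(s))^{−n_j/2}, ψ = φ∘g, P(s) = (n_jκ/(2(d−1)))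 ψ'(s)², D̃_i = D_i∘g, ρ̃ = ρ'∘g, and p̃ = p'∘g. Then for every t ∈ ℝ, at s = σ(t) the function u is twice differentiable and satisfies u''(s) + [−θ² n_j² κ D̃_j(s)/(2d(d−1)) − P(s)] u(s) = −θ² n_j k/(2 u(s)^{1−4/n_j}) + Σ_{1≤i≤M, i≠j} θ² n_j n_i κ D̃_i(s)/(2d(d−1) u(s)^{1−2n_i/n_j}) + θ² n_j κ(ρ̃(s) + p̃(s))/(2(d−1) u(s)). -/
set_option maxHeartbeats 2000000 in
/-- FRLW Einstein equations imply the alternate Schrödinger-type equation. -/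
theorem stmt_12
    (d κ : ℝ) (hd0 : d ≠ 0) (hd1 : d ≠ 1) (hκ : κ ≠ 0)
    (M : ℕ) (k Λ : ℝ) (n : Fin M → ℝ) (j : Fin M) (hnj : n j ≠ 0)
    (a φ : ℝ → ℝ) (D : Fin M → ℝ → ℝ) (ρ' p' V : ℝ → ℝ)
    (ha : Differentiable ℝ a) (ha' : Differentiable ℝ (deriv a))
    (hapos : ∀ t, 0 < a t)
    (hφ : Differentiable ℝ φ)
    (hEq1 : ∀ t, (d / 2) * (deriv a t / a t) ^ 2 + d * k / (2 * (a t) ^ 2)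
        = (κ / (d - 1)) * ((deriv φ t) ^ 2 / 2 + V (φ t)
            + (∑ i, D i t / a t ^ n i) + ρ' t) + Λ / (d - 1))
    (hEq2 : ∀ t, deriv (fun t => deriv a t / a t) t
        + (d / 2) * (deriv a t / a t) ^ 2 + (d - 2) * k / (2 * (a t) ^ 2)
        = -(κ / (d - 1)) * ((deriv φ t) ^ 2 / 2 - V (φ t)
            + (∑ i, (n i - d) * D i t / (d * a t ^ n i)) + p' t) + Λ / (d - 1))
    (θ : ℝ) (hθ : 0 < θ)
    (σ g : ℝ → ℝ)
    (hσ : ∀ t, deriv σ t = (1 / θ) * a t ^ (-(n j) / 2))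
    (hg : Differentiable ℝ g) (hgσ : ∀ t, g (σ t) = t)
    (u ψ P : ℝ → ℝ)
    (hu : ∀ s, u s = a (g s) ^ (-(n j) / 2))
    (hψ : ∀ s, ψ s = φ (g s))
    (hP : ∀ s, P s = (n j * κ / (2 * (d - 1))) * (deriv ψ s) ^ 2) :
    ∀ t, DifferentiableAt ℝ u (σ t) ∧ DifferentiableAt ℝ (deriv u) (σ t) ∧
      deriv (deriv u) (σ t)
        + (-(θ ^ 2 * (n j) ^ 2 * κ * D j (g (σ t))) / (2 * d * (d - 1)) - P (σ t))
          * u (σ t)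
        = -(θ ^ 2 * n j * k) / (2 * u (σ t) ^ (1 - 4 / n j))
          + (∑ i ∈ Finset.univ.filter (fun i => i ≠ j),
              θ ^ 2 * n j * n i * κ * D i (g (σ t))
                / (2 * d * (d - 1) * u (σ t) ^ (1 - 2 * n i / n j)))
          + θ ^ 2 * n j * κ * (ρ' (g (σ t)) + p' (g (σ t)))
            / (2 * (d - 1) * u (σ t)) := by
  intro t
  have hd1' : d - 1 ≠ 0 := sub_ne_zero.mpr hd1
  have hθ' : θ ≠ 0 := ne_of_gt hθ
  have hane : ∀ s, a s ≠ 0 := fun s => (hapos s).ne'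
  set nj := n j with hnjdef
  -- σ has positive derivative, is differentiable and strictly monotone
  have hσpos : ∀ s, 0 < deriv σ s := by
    intro s; rw [hσ s]
    have := Real.rpow_pos_of_pos (hapos s) (-nj / 2)
    positivity
  have hσdiff : ∀ s, DifferentiableAt ℝ σ s := by
    intro s
    by_contra h
    exact (hσpos s).ne' (deriv_zero_of_not_differentiableAt h)
  have hσmono : StrictMono σ := strictMono_of_deriv_pos hσpos
  have hσcont : Continuous σ := (Differentiable.continuous (fun s => hσdiff s))
  -- derivative of g at points σ s
  have hgσ' : ∀ s, deriv g (σ s) = (deriv σ s)⁻¹ := by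
    intro s
    have h1 : HasDerivAt (g ∘ σ) (deriv g (σ s) * deriv σ s) s :=
      ((hg (σ s)).hasDerivAt).comp s (hσdiff s).hasDerivAt
    have h2 : (g ∘ σ) = id := funext fun x => hgσ x
    rw [h2] at h1
    have h3 : deriv g (σ s) * deriv σ s = 1 := by
      have h4 := h1.deriv
      simp at h4
      linarith
    field_simp [(hσpos s).ne'] at h3 ⊢
    linarith [h3]
  -- f and its derivative
  set f : ℝ → ℝ := fun s => a s ^ (-nj / 2) with hf
  have hfd : ∀ s, HasDerivAt f (deriv a s * (-nj / 2) * a s ^ (-nj / 2 - 1)) s :=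
    fun s => (ha s).hasDerivAt.rpow_const (Or.inl (hane s))
  have hufg : u = f ∘ g := funext fun s => hu s
  have hud : ∀ s, HasDerivAt u
      ((deriv a (g s) * (-nj / 2) * a (g s) ^ (-nj / 2 - 1)) * deriv g s) s := by
    intro s
    rw [hufg]
    exact (hfd (g s)).comp s (hg s).hasDerivAt
  -- closed form w for deriv u on the range of σ
  set w : ℝ → ℝ := fun s => -(θ * nj / 2) * (deriv a s / a s) with hwdef
  have hw : ∀ s, (deriv a s * (-nj / 2) * a s ^ (-nj / 2 - 1)) * (deriv σ s)⁻¹ = w s := by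
    intro s
    rw [hσ s, hwdef]
    have h1 : ((1 : ℝ) / θ * a s ^ (-nj / 2))⁻¹ = θ * (a s ^ (-nj / 2))⁻¹ := by
      rw [mul_inv]; rw [one_div, inv_inv]
    rw [h1]
    have h2 : a s ^ (-nj / 2 - 1) * (a s ^ (-nj / 2))⁻¹ = (a s)⁻¹ := by
      rw [← Real.rpow_neg (hapos s).le, ← Real.rpow_add (hapos s)]
      have he : -nj / 2 - 1 + -(-nj / 2) = -1 := by ring
      rw [he, Real.rpow_neg_one]
    calc deriv a s * (-nj / 2) * a s ^ (-nj / 2 - 1) * (θ * (a s ^ (-nj / 2))⁻¹)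
        = (θ * (-nj / 2) * deriv a s) * (a s ^ (-nj / 2 - 1) * (a s ^ (-nj / 2))⁻¹) := by ring
      _ = (θ * (-nj / 2) * deriv a s) * (a s)⁻¹ := by rw [h2]
      _ = -(θ * nj / 2) * (deriv a s / a s) := by ring
  -- deriv u agrees with w ∘ g near σ t
  have hrange : Set.Ioo (σ (t - 1)) (σ (t + 1)) ⊆ Set.range σ := by
    intro x hx
    have h1 : Set.Ioo (σ (t - 1)) (σ (t + 1)) ⊆ σ '' Set.Ioo (t - 1) (t + 1) :=
      intermediate_value_Ioo (by linarith) hσcont.continuousOn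
    obtain ⟨y, _, hy⟩ := h1 hx
    exact ⟨y, hy⟩
  have hmem : σ t ∈ Set.Ioo (σ (t - 1)) (σ (t + 1)) :=
    ⟨hσmono (by linarith), hσmono (by linarith)⟩
  have hEv : deriv u =ᶠ[nhds (σ t)] (w ∘ g) := by
    apply Filter.eventuallyEq_of_mem (isOpen_Ioo.mem_nhds hmem)
    intro x hx
    obtain ⟨y, hy⟩ := hrange hx
    have hgx : g x = y := by rw [← hy, hgσ]
    have h1 : deriv u x = deriv a (g x) * (-nj / 2) * a (g x) ^ (-nj / 2 - 1) * deriv g x :=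
      (hud x).deriv
    rw [h1]
    show _ = w (g x)
    rw [hgx, ← hy, hgσ' y, hw y]
  -- w is differentiable; second derivative of u
  have hHd : ∀ s, DifferentiableAt ℝ (fun x => deriv a x / a x) s :=
    fun s => (ha' s).div (ha s) (hane s)
  have hwd : ∀ s, HasDerivAt w (-(θ * nj / 2) * deriv (fun x => deriv a x / a x) s) s := by
    intro s
    exact ((hHd s).hasDerivAt).const_mul _
  have hwgd : HasDerivAt (w ∘ g)
      ((-(θ * nj / 2) * deriv (fun x => deriv a x / a x) t) * deriv g (σ t)) (σ t) := by
    have h0 := ((hwd (g (σ t))).comp (σ t) (hg (σ t)).hasDerivAt)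
    rwa [hgσ t] at h0
  have hdu_diff : DifferentiableAt ℝ (deriv u) (σ t) := by
    rw [hEv.differentiableAt_iff]
    exact hwgd.differentiableAt
  have hdu2 : deriv (deriv u) (σ t)
      = (-(θ * nj / 2) * deriv (fun x => deriv a x / a x) t) * (deriv σ t)⁻¹ := by
    rw [hEv.deriv_eq, hwgd.deriv, hgσ' t]
  refine ⟨(hud (σ t)).differentiableAt, hdu_diff, ?_⟩
  -- notation
  set A := a t with hA
  set B := a t ^ (nj / 2) with hB
  have hBpos : 0 < B := Real.rpow_pos_of_pos (hapos t) _
  have hBne : B ≠ 0 := hBpos.ne'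
  have hAne : A ≠ 0 := hane t
  have hApos : 0 < A := hapos t
  have hBinv : a t ^ (-nj / 2) = B⁻¹ := by
    rw [show -nj / 2 = -(nj / 2) by ring, Real.rpow_neg (hapos t).le]
  have hEj : a t ^ nj = B * B := by
    rw [show nj = nj / 2 + nj / 2 by ring, Real.rpow_add (hapos t)]
  have hσtinv : (deriv σ t)⁻¹ = θ * B := by
    rw [hσ t, hBinv, mul_inv, one_div, inv_inv, inv_inv]
  -- value of u at σ t
  have huσ : u (σ t) = B⁻¹ := by rw [hu, hgσ, hBinv]
  -- second derivative value
  have hdu2' : deriv (deriv u) (σ t)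
      = -(θ * nj / 2) * deriv (fun x => deriv a x / a x) t * (θ * B) := by
    rw [hdu2, hσtinv]
  -- derivative of ψ at σ t
  have hψσ : deriv ψ (σ t) = deriv φ t * (θ * B) := by
    have hψfg : ψ = φ ∘ g := funext fun s => hψ s
    have h1 : HasDerivAt ψ (deriv φ (g (σ t)) * deriv g (σ t)) (σ t) := by
      rw [hψfg]
      exact ((hφ (g (σ t))).hasDerivAt).comp (σ t) (hg (σ t)).hasDerivAt
    rw [h1.deriv, hgσ t, hgσ' t, hσtinv]
  have hPσ : P (σ t) = nj * κ / (2 * (d - 1)) * (deriv φ t * (θ * B)) ^ 2 := by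
    rw [hP, hψσ]
  -- power conversions
  have hpow : ∀ c e : ℝ, (-nj / 2) * c = e + -nj / 2 → u (σ t) ^ c = A ^ e * B⁻¹ := by
    intro c e hce
    rw [hu, hgσ, ← Real.rpow_mul (hapos t).le, hce, Real.rpow_add (hapos t), hBinv]
  have h14 : u (σ t) ^ (1 - 4 / nj) = A ^ (2 : ℕ) * B⁻¹ := by
    rw [hpow (1 - 4 / nj) 2 (by field_simp; ring)]
    norm_num [Real.rpow_natCast]
  have h1i : ∀ i, u (σ t) ^ (1 - 2 * n i / nj) = A ^ (n i) * B⁻¹ := by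
    intro i
    exact hpow _ _ (by field_simp; ring)
  -- Einstein combination
  have hEne : ∀ i : Fin M, a t ^ n i ≠ 0 := fun i => (Real.rpow_pos_of_pos (hapos t) _).ne'
  have hsum : (∑ i, (n i - d) * D i t / (d * a t ^ n i)) + (∑ i, D i t / a t ^ n i)
      = ∑ i, n i * D i t / (d * a t ^ n i) := by
    rw [← Finset.sum_add_distrib]
    refine Finset.sum_congr rfl fun i _ => ?_
    field_simp
    ring
  have hsplit : (∑ i, n i * D i t / (d * a t ^ n i))
      = nj * D j t / (d * (B * B)) + ∑ i ∈ Finset.univ.erase j, n i * D i t / (d * a t ^ n i) := by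
    rw [← hEj]
    exact (Finset.add_sum_erase _ (fun i => n i * D i t / (d * a t ^ n i)) (Finset.mem_univ j)).symm
  have key : deriv (fun x => deriv a x / a x) t
      = k / A ^ 2 - κ / (d - 1) * (deriv φ t) ^ 2
        - κ / (d - 1) * (nj * D j t / (d * (B * B))
            + ∑ i ∈ Finset.univ.erase j, n i * D i t / (d * a t ^ n i))
        - κ / (d - 1) * (ρ' t + p' t) := by
    rw [← hsplit]
    linear_combination (hEq2 t) - (hEq1 t) - (κ / (d - 1)) * hsum
  -- rewrite sum in goal
  have hsum2 : (∑ i ∈ Finset.univ.filter (fun i => i ≠ j),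
        θ ^ 2 * nj * n i * κ * D i t / (2 * d * (d - 1) * (A ^ (n i) * B⁻¹)))
      = θ ^ 2 * nj * κ * B / (2 * (d - 1))
        * ∑ i ∈ Finset.univ.erase j, n i * D i t / (d * a t ^ n i) := by
    rw [Finset.filter_ne', Finset.mul_sum]
    refine Finset.sum_congr rfl fun i _ => ?_
    have := hEne i
    rw [← hA]
    field_simp
  -- final computation
  simp only [hgσ t]
  rw [hdu2', hPσ, h14]
  simp only [h1i]
  rw [huσ, hsum2, key]
  field_simp
  ring
end

section
/- Let d ∈ ℕ with d ≥ 2, κ ∈ ℝ \ {0}, and Λ ∈ ℝ. Let X_1, …, X_d : ℝ → ℝ be twice differentiable with X_l(t) > 0 for all t, let φ be differentiable, and let ρ, p : ℝ → ℝ and V : ℝ → ℝ satisfy the Bianchi I Einstein equations (I_0), (I_1), …, (I_d) for all t ∈ ℝ. Let ν ∈ ℝ \ {0} and set R = (X_1⋯X_d)^ν. Let θ > 0 and q ∈ ℝ \ {0}, and let τ satisfy τ'(t) = θ R(t)^q for all t with differentiable inverse f (f(τ(t)) = t). Then: (a) the function t ↦ X_1(t)²⋯X_d(t)² · Σ_{1≤l<k≤d}(H_l(t)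 − H_k(t))² is constant on ℝ, where H_l = X_l'/X_l; write its value as 2dκD. (b) With Y(s) = R(f(s))^q, φ̃ = φ∘f, Q(s) = (qνdκ/(d−1)) φ̃'(s)², ρ̃ = ρ∘f, and p̃ = p∘f, for every t ∈ ℝ, at s = τ(t) the function Y is twice differentiable and satisfies Y''(s) + Q(s)Y(s) = −2qνdκD/(θ²(d−1) Y(s)^{(2+qν)/(qν)}) − qνdκ(ρ̃(s) + p̃(s))/(θ²(d−1) Y(s)). -/
/-!
Subtracting two spatial equations gives `(H_l - H_k)' = -(∑ₘ Hₘ) (H_l - H_k)`, while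
`(∏ₘ Xₘ)' = (∏ₘ Xₘ) ∑ₘ Hₘ`, so every product `(∏ₘ Xₘ) (H_l - H_k)` is constant; this is (a).
Summing the spatial equations and subtracting `d` times the constraint `(I_0)` gives
`(d - 1) (∑ Hₗ)' + dκ (φ'² + ρ + p) + d ∑ Hₗ² - (∑ Hₗ)² = 0`, and by Lagrange's identity the last
two terms are `2dκD / (∏ₘ Xₘ)²`. In the time `s = τ t` we have `ds/dt = θ Y`, hence
`dY/ds = (qν/θ) ∑ Hₗ` and `d²Y/ds² = qν (∑ Hₗ)' / (θ² Y)`, and (b) follows by substitution.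
-/

open Finset Real Set Filter Topology Function

section PairSums

variable {ι M R : Type*} [Fintype ι] [LinearOrder ι]

theorem sum_lt_add_swap_add_sum_diag [AddCommMonoid M] (F : ι → ι → M) :
    ∑ pr ∈ univ.filter (fun pr : ι × ι => pr.1 < pr.2), (F pr.1 pr.2 + F pr.2 pr.1)
      + ∑ l, F l l = ∑ l, ∑ k, F l k := by
  have hdiag : ∑ l, F l l = ∑ l, ∑ k, if l = k then F l k else 0 := by simp
  rw [sum_add_distrib, sum_filter, sum_filter, Fintype.sum_prod_type, Fintype.sum_prod_type,
    sum_comm (f := fun l k => if l < k then F k l else 0), hdiag, ← sum_add_distrib,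
    ← sum_add_distrib]
  refine sum_congr rfl fun l _ => ?_
  rw [← sum_add_distrib, ← sum_add_distrib]
  refine sum_congr rfl fun k _ => ?_
  rcases lt_trichotomy l k with h | rfl | h
  · simp [h, h.ne, not_lt_of_gt h]
  · simp
  · simp [h, h.ne', not_lt_of_gt h]

theorem two_mul_sum_lt_mul_add_sum_sq [CommSemiring R] (g : ι → R) :
    2 * ∑ pr ∈ univ.filter (fun pr : ι × ι => pr.1 < pr.2), g pr.1 * g pr.2 + ∑ l, g l ^ 2
      = (∑ l, g l) ^ 2 := by
  rw [sq, sum_mul_sum, ← sum_lt_add_swap_add_sum_diag, mul_sum]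
  simp only [sq, mul_comm (g _) (g _), two_mul]

theorem sum_lt_sub_sq [CommRing R] (g : ι → R) :
    ∑ pr ∈ univ.filter (fun pr : ι × ι => pr.1 < pr.2), (g pr.1 - g pr.2) ^ 2
      = Fintype.card ι * ∑ l, g l ^ 2 - (∑ l, g l) ^ 2 := by
  have hsq := sum_lt_add_swap_add_sum_diag fun l (_ : ι) => g l ^ 2
  simp only [sum_const, card_univ, nsmul_eq_mul] at hsq
  have hsub : ∑ pr ∈ univ.filter (fun pr : ι × ι => pr.1 < pr.2), (g pr.1 - g pr.2) ^ 2
      = ∑ pr ∈ univ.filter (fun pr : ι × ι => pr.1 < pr.2), (g pr.1 ^ 2 + g pr.2 ^ 2)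
        - 2 * ∑ pr ∈ univ.filter (fun pr : ι × ι => pr.1 < pr.2), g pr.1 * g pr.2 := by
    rw [mul_sum, ← sum_sub_distrib]
    exact sum_congr rfl fun _ _ => by ring
  rw [← mul_sum] at hsq
  rw [hsub]
  linear_combination hsq - two_mul_sum_lt_mul_add_sum_sq g

theorem two_mul_sum_lt_mul_filter_ne_add [CommRing R] (g : ι → R) (i : ι) :
    2 * ∑ pr ∈ univ.filter (fun pr : ι × ι => pr.1 < pr.2 ∧ pr.1 ≠ i ∧ pr.2 ≠ i),
        g pr.1 * g pr.2 + (∑ l, g l ^ 2 - g i ^ 2) = (∑ l, g l - g i) ^ 2 := by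
  have hsum : ∀ h : ι → R, ∑ l, update h i 0 l = ∑ l, h l - h i := fun h => by
    simp [sum_update_of_mem, sdiff_singleton_eq_erase, sum_erase_eq_sub]
  have hpairs : ∑ pr ∈ univ.filter (fun pr : ι × ι => pr.1 < pr.2 ∧ pr.1 ≠ i ∧ pr.2 ≠ i),
        g pr.1 * g pr.2 = ∑ pr ∈ univ.filter (fun pr : ι × ι => pr.1 < pr.2),
          update g i 0 pr.1 * update g i 0 pr.2 := by
    rw [sum_filter, sum_filter]
    refine sum_congr rfl fun pr _ => ?_
    by_cases h1 : pr.1 = i <;> by_cases h2 : pr.2 = i <;> simp [h1, h2]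
  have hupd := two_mul_sum_lt_mul_add_sum_sq (update g i 0)
  have hsq : ∀ l, update g i 0 l ^ 2 = update (g · ^ 2) i 0 l := fun l => by
    by_cases h : l = i <;> simp [h]
  simp only [hsq, hsum] at hupd
  rwa [hpairs]

end PairSums

section BianchiAlgebra

variable {ι : Type*} [Fintype ι] [LinearOrder ι]

/-- The left-hand side of the spatial equation `(I_i)`, with `a l = H_l'(t)` and `b l = H_l(t)`. -/
def spatialLHS (a b : ι → ℝ) (i : ι) : ℝ :=
  ∑ l ∈ univ.filter (fun l => l ≠ i), (a l + b l ^ 2)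
    + ∑ pr ∈ univ.filter (fun pr : ι × ι => pr.1 < pr.2 ∧ pr.1 ≠ i ∧ pr.2 ≠ i), b pr.1 * b pr.2

theorem two_mul_spatialLHS (a b : ι → ℝ) (i : ι) :
    2 * spatialLHS a b i
      = 2 * (∑ l, a l - a i) + (∑ l, b l - b i) ^ 2 + (∑ l, b l ^ 2 - b i ^ 2) := by
  rw [spatialLHS, filter_ne', sum_erase_eq_sub (mem_univ i), sum_add_distrib,
    ← two_mul_sum_lt_mul_filter_ne_add b i]
  ring

theorem sub_add_sum_mul_sub_eq_zero {a b : ι → ℝ} {l k : ι}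
    (h : spatialLHS a b l = spatialLHS a b k) :
    a l - a k + (∑ m, b m) * (b l - b k) = 0 := by
  have := congr_arg (2 * ·) h
  simp only [two_mul_spatialLHS] at this
  linear_combination -this / 2

theorem sum_spatialLHS (a b : ι → ℝ) :
    ∑ i, spatialLHS a b i
      = Fintype.card ι * ∑ pr ∈ univ.filter (fun pr : ι × ι => pr.1 < pr.2), b pr.1 * b pr.2
        + (Fintype.card ι - 1) * ∑ l, a l + (Fintype.card ι * ∑ l, b l ^ 2 - (∑ l, b l) ^ 2) := by
  have h2 : 2 * ∑ i, spatialLHS a b i = ∑ i,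
      (2 * (∑ l, a l - a i) + (∑ l, b l - b i) ^ 2 + (∑ l, b l ^ 2 - b i ^ 2)) := by
    rw [mul_sum]; exact sum_congr rfl fun i _ => two_mul_spatialLHS a b i
  simp only [sum_add_distrib, sum_sub_distrib, sub_sq, ← mul_sum, sum_const,
    card_univ, nsmul_eq_mul] at h2
  linear_combination h2 / 2 - Fintype.card ι / 2 * two_mul_sum_lt_mul_add_sum_sq b

end BianchiAlgebra

section Calculus

theorem hasDerivAt_prod_mul_sum {𝕜 ι : Type*} [NontriviallyNormedField 𝕜] [Fintype ι]
    {X H : ι → 𝕜 → 𝕜} {t : 𝕜} (h : ∀ l, HasDerivAt (X l) (X l t * H l t) t) :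
    HasDerivAt (fun t => ∏ l, X l t) ((∏ l, X l t) * ∑ l, H l t) t := by
  classical
  refine (HasDerivAt.fun_finsetProd (u := univ) fun l _ => h l).congr_deriv ?_
  rw [mul_sum]
  refine sum_congr rfl fun l _ => ?_
  rw [smul_eq_mul, ← mul_assoc, prod_erase_mul _ _ (mem_univ l)]

theorem hasDerivAt_of_eq_deriv_div {X H : ℝ → ℝ} {t : ℝ} (hX : DifferentiableAt ℝ X t)
    (hXt : X t ≠ 0) (hH : H t = deriv X t / X t) : HasDerivAt X (X t * H t) t :=
  hX.hasDerivAt.congr_deriv (by rw [hH]; field_simp)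

theorem hasDerivAt_rpow_mul {P : ℝ → ℝ} {t G : ℝ} (a : ℝ) (hP : HasDerivAt P (P t * G) t)
    (hPpos : 0 < P t) : HasDerivAt (fun t => P t ^ a) (P t ^ a * (a * G)) t := by
  convert hP.rpow_const (p := a) (Or.inl hPpos.ne') using 1
  rw [rpow_sub_one hPpos.ne']
  field_simp

theorem mul_eq_of_hasDerivAt_mul_neg {u w g : ℝ → ℝ} (hu : ∀ t, HasDerivAt u (u t * g t) t)
    (hw : ∀ t, HasDerivAt w (-(w t * g t)) t) (t₁ t₂ : ℝ) : u t₁ * w t₁ = u t₂ * w t₂ :=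
  is_const_of_deriv_eq_zero (fun t => ((hu t).mul (hw t)).differentiableAt)
    (fun t => by rw [((hu t).mul (hw t)).deriv]; ring) t₁ t₂

theorem rpow_rpow_add_div_self {x : ℝ} (hx : 0 < x) {a : ℝ} (ha : a ≠ 0) (b : ℝ) :
    (x ^ a) ^ ((b + a) / a) = x ^ a * x ^ b := by
  rw [← rpow_mul hx.le, mul_div_cancel₀ _ ha, rpow_add hx, mul_comm]

end Calculus

section TimeChange

variable {τ f : ℝ → ℝ}

theorem eventually_apply_eq_of_leftInverse (hτ : Continuous τ) (hmono : StrictMono τ)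
    (hfτ : LeftInverse f τ) (t : ℝ) : ∀ᶠ s in 𝓝 (τ t), τ (f s) = s := by
  have hsub : Ioo (τ (t - 1)) (τ (t + 1)) ⊆ τ '' Ioo (t - 1) (t + 1) :=
    intermediate_value_Ioo (by linarith) hτ.continuousOn
  filter_upwards [Ioo_mem_nhds (hmono (sub_one_lt t)) (hmono (lt_add_one t))] with s hs
  obtain ⟨u, -, rfl⟩ := hsub hs
  rw [hfτ u]

theorem eventually_hasDerivAt_of_leftInverse (hτ : ∀ u, 0 < deriv τ u) (hf : Continuous f)
    (hfτ : LeftInverse f τ) (t : ℝ) : ∀ᶠ s in 𝓝 (τ t), HasDerivAt f (deriv τ (f s))⁻¹ s := by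
  have hderiv : ∀ u, HasDerivAt τ (deriv τ u) u := fun u =>
    (differentiableAt_of_deriv_ne_zero (hτ u).ne').hasDerivAt
  have hcont : Continuous τ := continuous_iff_continuousAt.2 fun u => (hderiv u).continuousAt
  filter_upwards [(eventually_apply_eq_of_leftInverse hcont (strictMono_of_deriv_pos hτ) hfτ
    t).eventually_nhds] with s hs
  exact HasDerivAt.of_local_left_inverse hf.continuousAt (hderiv (f s)) (hτ _).ne' hs

theorem hasDerivAt_comp_leftInverse (hτ : ∀ u, 0 < deriv τ u) (hf : Continuous f)
    (hfτ : LeftInverse f τ) {g : ℝ → ℝ} {g' t : ℝ} (hg : HasDerivAt g g' t) :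
    HasDerivAt (fun s => g (f s)) (g' / deriv τ t) (τ t) := by
  have hft := (eventually_hasDerivAt_of_leftInverse hτ hf hfτ t).self_of_nhds
  rw [hfτ t] at hft
  rw [← hfτ t] at hg
  exact (hg.comp (τ t) hft).congr_deriv (div_eq_mul_inv _ _).symm

theorem deriv_comp_leftInverse_eventuallyEq (hτ : ∀ u, 0 < deriv τ u) (hf : Continuous f)
    (hfτ : LeftInverse f τ) {g k : ℝ → ℝ} (hg : ∀ u, HasDerivAt g (deriv τ u * k u) u) (t : ℝ) :
    deriv (fun s => g (f s)) =ᶠ[𝓝 (τ t)] fun s => k (f s) := by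
  filter_upwards [eventually_hasDerivAt_of_leftInverse hτ hf hfτ t] with s hs
  refine ((hg (f s)).comp s hs).deriv.trans ?_
  field_simp [(hτ (f s)).ne']

theorem hasDerivAt_deriv_comp_leftInverse (hτ : ∀ u, 0 < deriv τ u) (hf : Continuous f)
    (hfτ : LeftInverse f τ) {g k : ℝ → ℝ} (hg : ∀ u, HasDerivAt g (deriv τ u * k u) u)
    {k' t : ℝ} (hk : HasDerivAt k k' t) :
    HasDerivAt (deriv fun s => g (f s)) (k' / deriv τ t) (τ t) :=
  (hasDerivAt_comp_leftInverse hτ hf hfτ hk).congr_of_eventuallyEq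
    (deriv_comp_leftInverse_eventuallyEq hτ hf hfτ hg t)

theorem hasDerivAt_deriv_rpow_comp_leftInverse {P G : ℝ → ℝ} {θ a : ℝ} (hθ : 0 < θ)
    (hPpos : ∀ u, 0 < P u) (hP : ∀ u, HasDerivAt P (P u * G u) u)
    (hτ : ∀ u, deriv τ u = θ * P u ^ a) (hf : Continuous f) (hfτ : LeftInverse f τ)
    {G' t : ℝ} (hG : HasDerivAt G G' t) :
    HasDerivAt (deriv fun s => P (f s) ^ a) (a / θ * G' / (θ * P t ^ a)) (τ t) := by
  have hτpos : ∀ u, 0 < deriv τ u := fun u => hτ u ▸ mul_pos hθ (rpow_pos_of_pos (hPpos u) a)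
  have hg : ∀ u, HasDerivAt (fun u => P u ^ a) (deriv τ u * (a / θ * G u)) u := fun u =>
    (hasDerivAt_rpow_mul a (hP u) (hPpos u)).congr_deriv (by rw [hτ]; field_simp)
  simpa only [hτ] using hasDerivAt_deriv_comp_leftInverse hτpos hf hfτ hg (hG.const_mul (a / θ))

end TimeChange

section BianchiI

variable {ι : Type*} [Fintype ι] [LinearOrder ι]

theorem prod_sq_mul_sum_sub_sq_eq {X H : ι → ℝ → ℝ}
    (hX : ∀ l t, HasDerivAt (X l) (X l t * H l t) t)
    (hH : ∀ l t, HasDerivAt (H l) (deriv (H l) t) t) {c : ℝ → ℝ}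
    (hI : ∀ i t, spatialLHS (fun l => deriv (H l) t) (fun l => H l t) i = c t) (t₁ t₂ : ℝ) :
    (∏ l, X l t₁) ^ 2
        * ∑ pr ∈ univ.filter (fun pr : ι × ι => pr.1 < pr.2), (H pr.1 t₁ - H pr.2 t₁) ^ 2
      = (∏ l, X l t₂) ^ 2
        * ∑ pr ∈ univ.filter (fun pr : ι × ι => pr.1 < pr.2), (H pr.1 t₂ - H pr.2 t₂) ^ 2 := by
  have hP : ∀ t, HasDerivAt (fun t => ∏ l, X l t) ((∏ l, X l t) * ∑ l, H l t) t :=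
    fun t => hasDerivAt_prod_mul_sum fun l => hX l t
  have hshear : ∀ l k t, HasDerivAt (fun t => H l t - H k t)
      (-((H l t - H k t) * ∑ m, H m t)) t := fun l k t =>
    ((hH l t).sub (hH k t)).congr_deriv <| by
      linear_combination sub_add_sum_mul_sub_eq_zero ((hI l t).trans (hI k t).symm)
  simp only [mul_sum, ← mul_pow]
  exact sum_congr rfl fun pr _ => congrArg (· ^ 2)
    (mul_eq_of_hasDerivAt_mul_neg hP (hshear pr.1 pr.2) t₁ t₂)

theorem bianchi_raychaudhuri {a b : ι → ℝ} {κ Λ φ' V ρ p : ℝ}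
    (h0 : ∑ pr ∈ univ.filter (fun pr : ι × ι => pr.1 < pr.2), b pr.1 * b pr.2
      = κ * (φ' ^ 2 / 2 + V + ρ) + Λ)
    (hi : ∀ i, spatialLHS a b i = -κ * (φ' ^ 2 / 2 - V + p) + Λ) :
    (Fintype.card ι - 1) * ∑ l, a l + Fintype.card ι * κ * (φ' ^ 2 + ρ + p)
      + (Fintype.card ι * ∑ l, b l ^ 2 - (∑ l, b l) ^ 2) = 0 := by
  have h := sum_spatialLHS a b
  simp only [hi, h0, sum_const, card_univ, nsmul_eq_mul] at h
  linear_combination -h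

end BianchiI

theorem stmt_13_general
    (d : ℕ) (hd : 2 ≤ d) (κ Λ : ℝ)
    (X : Fin d → ℝ → ℝ) (φ ρ p V : ℝ → ℝ)
    (hX : ∀ l, Differentiable ℝ (X l)) (hX' : ∀ l, Differentiable ℝ (deriv (X l)))
    (hXpos : ∀ l t, 0 < X l t)
    (hφ : Differentiable ℝ φ)
    (H : Fin d → ℝ → ℝ) (hH : ∀ l t, H l t = deriv (X l) t / X l t)
    (hI0 : ∀ t, (∑ pr ∈ Finset.univ.filter (fun pr : Fin d × Fin d => pr.1 < pr.2),
          H pr.1 t * H pr.2 t)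
        = κ * ((deriv φ t) ^ 2 / 2 + V (φ t) + ρ t) + Λ)
    (hIi : ∀ i : Fin d, ∀ t,
        (∑ l ∈ Finset.univ.filter (fun l => l ≠ i), (deriv (H l) t + H l t ^ 2))
          + (∑ pr ∈ Finset.univ.filter
              (fun pr : Fin d × Fin d => pr.1 < pr.2 ∧ pr.1 ≠ i ∧ pr.2 ≠ i),
              H pr.1 t * H pr.2 t)
        = -κ * ((deriv φ t) ^ 2 / 2 - V (φ t) + p t) + Λ)
    (ν : ℝ) (hν : ν ≠ 0)
    (R : ℝ → ℝ) (hR : ∀ t, R t = (∏ l, X l t) ^ ν)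
    (θ q : ℝ) (hθ : 0 < θ) (hq : q ≠ 0)
    (τ f : ℝ → ℝ)
    (hτ : ∀ t, deriv τ t = θ * R t ^ q)
    (hf : Differentiable ℝ f) (hfτ : ∀ t, f (τ t) = t)
    (Y φt Q : ℝ → ℝ)
    (hY : ∀ s, Y s = R (f s) ^ q)
    (hφt : ∀ s, φt s = φ (f s))
    (hQ : ∀ s, Q s = (q * ν * (d : ℝ) * κ / ((d : ℝ) - 1)) * (deriv φt s) ^ 2) :
    (∀ t₁ t₂,
      (∏ l, X l t₁) ^ 2 *
          (∑ pr ∈ Finset.univ.filter (fun pr : Fin d × Fin d => pr.1 < pr.2),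
            (H pr.1 t₁ - H pr.2 t₁) ^ 2)
        = (∏ l, X l t₂) ^ 2 *
          (∑ pr ∈ Finset.univ.filter (fun pr : Fin d × Fin d => pr.1 < pr.2),
            (H pr.1 t₂ - H pr.2 t₂) ^ 2)) ∧
    ∀ D : ℝ,
      (∀ t, (∏ l, X l t) ^ 2 *
          (∑ pr ∈ Finset.univ.filter (fun pr : Fin d × Fin d => pr.1 < pr.2),
            (H pr.1 t - H pr.2 t) ^ 2) = 2 * (d : ℝ) * κ * D) →
      ∀ t, DifferentiableAt ℝ Y (τ t) ∧ DifferentiableAt ℝ (deriv Y) (τ t) ∧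
        deriv (deriv Y) (τ t) + Q (τ t) * Y (τ t)
          = -(2 * q * ν * (d : ℝ) * κ * D)
              / (θ ^ 2 * ((d : ℝ) - 1) * Y (τ t) ^ ((2 + q * ν) / (q * ν)))
            - q * ν * (d : ℝ) * κ * (ρ (f (τ t)) + p (f (τ t)))
              / (θ ^ 2 * ((d : ℝ) - 1) * Y (τ t)) := by
  have hXH : ∀ l t, HasDerivAt (X l) (X l t * H l t) t := fun l t =>
    hasDerivAt_of_eq_deriv_div (hX l t) (hXpos l t).ne' (hH l t)
  have hHder : ∀ l t, HasDerivAt (H l) (deriv (H l) t) t := fun l t => by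
    rw [show H l = fun t => deriv (X l) t / X l t from funext (hH l)]
    exact ((hX' l t).div (hX l t) (hXpos l t).ne').hasDerivAt
  refine ⟨prod_sq_mul_sum_sub_sq_eq hXH hHder (hIi · ·), fun D hD t => ?_⟩
  have hPpos : ∀ t, 0 < ∏ l, X l t := fun t => prod_pos fun l _ => hXpos l t
  have hRq : ∀ t, R t ^ q = (∏ l, X l t) ^ (q * ν) := fun t => by
    rw [hR, ← rpow_mul (hPpos t).le, mul_comm ν]
  have hτ' : ∀ u, deriv τ u = θ * (∏ l, X l u) ^ (q * ν) := fun u => by rw [hτ, hRq]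
  have hτpos : ∀ u, 0 < deriv τ u := fun u => hτ' u ▸ mul_pos hθ (rpow_pos_of_pos (hPpos u) _)
  obtain rfl : Y = fun s => (∏ l, X l (f s)) ^ (q * ν) := funext fun s => by rw [hY, hRq]
  obtain rfl : φt = fun s => φ (f s) := funext hφt
  have hP : ∀ t, HasDerivAt (fun t => ∏ l, X l t) ((∏ l, X l t) * ∑ l, H l t) t :=
    fun t => hasDerivAt_prod_mul_sum fun l => hXH l t
  have hY'' := hasDerivAt_deriv_rpow_comp_leftInverse hθ hPpos hP hτ' hf.continuous hfτ
    (HasDerivAt.fun_sum fun l _ => hHder l t)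
  refine ⟨(hasDerivAt_comp_leftInverse hτpos hf.continuous hfτ
    (hasDerivAt_rpow_mul _ (hP t) (hPpos t))).differentiableAt, hY''.differentiableAt, ?_⟩
  have htrace := bianchi_raychaudhuri (hI0 t) (hIi · t)
  have hDt := hD t
  rw [sum_lt_sub_sq (fun l => H l t)] at hDt
  simp only [Fintype.card_fin] at htrace hDt
  rw [hY''.deriv, hQ,
    (hasDerivAt_comp_leftInverse hτpos hf.continuous hfτ (hφ t).hasDerivAt).deriv, hτ']
  simp only [hfτ, rpow_rpow_add_div_self (hPpos t) (mul_ne_zero hq hν), rpow_two]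
  have hd1 : (d : ℝ) - 1 ≠ 0 := sub_ne_zero.2 (Nat.cast_ne_one.2 (by omega))
  field_simp [(hPpos t).ne', (rpow_pos_of_pos (hPpos t) (q * ν)).ne']
  linear_combination (∏ l, X l t) ^ 2 * htrace - hDt

/-- Bianchi I Einstein equations imply a generalized EMP equation. -/
theorem stmt_13
    (d : ℕ) (hd : 2 ≤ d) (κ Λ : ℝ) (hκ : κ ≠ 0)
    (X : Fin d → ℝ → ℝ) (φ ρ p V : ℝ → ℝ)
    (hX : ∀ l, Differentiable ℝ (X l)) (hX' : ∀ l, Differentiable ℝ (deriv (X l)))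
    (hXpos : ∀ l t, 0 < X l t)
    (hφ : Differentiable ℝ φ)
    (H : Fin d → ℝ → ℝ) (hH : ∀ l t, H l t = deriv (X l) t / X l t)
    (hI0 : ∀ t, (∑ pr ∈ Finset.univ.filter (fun pr : Fin d × Fin d => pr.1 < pr.2),
          H pr.1 t * H pr.2 t)
        = κ * ((deriv φ t) ^ 2 / 2 + V (φ t) + ρ t) + Λ)
    (hIi : ∀ i : Fin d, ∀ t,
        (∑ l ∈ Finset.univ.filter (fun l => l ≠ i), (deriv (H l) t + H l t ^ 2))
          + (∑ pr ∈ Finset.univ.filter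
              (fun pr : Fin d × Fin d => pr.1 < pr.2 ∧ pr.1 ≠ i ∧ pr.2 ≠ i),
              H pr.1 t * H pr.2 t)
        = -κ * ((deriv φ t) ^ 2 / 2 - V (φ t) + p t) + Λ)
    (ν : ℝ) (hν : ν ≠ 0)
    (R : ℝ → ℝ) (hR : ∀ t, R t = (∏ l, X l t) ^ ν)
    (θ q : ℝ) (hθ : 0 < θ) (hq : q ≠ 0)
    (τ f : ℝ → ℝ)
    (hτ : ∀ t, deriv τ t = θ * R t ^ q)
    (hf : Differentiable ℝ f) (hfτ : ∀ t, f (τ t) = t)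
    (Y φt Q : ℝ → ℝ)
    (hY : ∀ s, Y s = R (f s) ^ q)
    (hφt : ∀ s, φt s = φ (f s))
    (hQ : ∀ s, Q s = (q * ν * (d : ℝ) * κ / ((d : ℝ) - 1)) * (deriv φt s) ^ 2) :
    (∀ t₁ t₂,
      (∏ l, X l t₁) ^ 2 *
          (∑ pr ∈ Finset.univ.filter (fun pr : Fin d × Fin d => pr.1 < pr.2),
            (H pr.1 t₁ - H pr.2 t₁) ^ 2)
        = (∏ l, X l t₂) ^ 2 *
          (∑ pr ∈ Finset.univ.filter (fun pr : Fin d × Fin d => pr.1 < pr.2),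
            (H pr.1 t₂ - H pr.2 t₂) ^ 2)) ∧
    ∀ D : ℝ,
      (∀ t, (∏ l, X l t) ^ 2 *
          (∑ pr ∈ Finset.univ.filter (fun pr : Fin d × Fin d => pr.1 < pr.2),
            (H pr.1 t - H pr.2 t) ^ 2) = 2 * (d : ℝ) * κ * D) →
      ∀ t, DifferentiableAt ℝ Y (τ t) ∧ DifferentiableAt ℝ (deriv Y) (τ t) ∧
        deriv (deriv Y) (τ t) + Q (τ t) * Y (τ t)
          = -(2 * q * ν * (d : ℝ) * κ * D)
              / (θ ^ 2 * ((d : ℝ) - 1) * Y (τ t) ^ ((2 + q * ν) / (q * ν)))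
            - q * ν * (d : ℝ) * κ * (ρ (f (τ t)) + p (f (τ t)))
              / (θ ^ 2 * ((d : ℝ) - 1) * Y (τ t)) :=
  stmt_13_general d hd κ Λ X φ ρ p V hX hX' hXpos hφ H hH hI0 hIi ν hν R hR θ q hθ hq τ f hτ hf hfτ
    Y φt Q hY hφt hQ
end
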